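/- arXiv:1403.5546 — 5 statements merged into one kernel-verified Lean document; each statement's English description precedes it below -/
import Mathlib

section
/- For every non-crossing perfect matching M of 2k points in convex position with k ≥ 4, there exist two disjoint 'separated pairs' in M, i.e., two disjoint subsets of M each of which is a block or an antiblock. -/
/-- Two chords of points in convex position cross (in the order a < c < b < d). -/
def Cross {n : ℕ} (e f : Sym2 (Fin n)) : Prop :=
  ∃ a b c d : Fin n, e = s(a, b) ∧ f = s(c, d) ∧ a < c ∧ c < b ∧ b < d

/-- A non-crossing perfect matching of `n` points in convex position. -/
def IsNCMatching {n : ℕ} (M : Finset (Sym2 (Fin n))) : Prop :=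
  (∀ e ∈ M, ¬ e.IsDiag) ∧
  (∀ v : Fin n, ∃! e, e ∈ M ∧ v ∈ e) ∧
  (∀ e ∈ M, ∀ f ∈ M, ¬ Cross e f)

/-- Disjoint compatibility: no common edge, no crossing edges. -/
def DisjCompat {n : ℕ} (M M' : Finset (Sym2 (Fin n))) : Prop :=
  (∀ e ∈ M, e ∉ M') ∧ (∀ e ∈ M, ∀ f ∈ M', ¬ Cross e f ∧ ¬ Cross f e)

/-- Cyclic shift of an index by `j`. -/
def cyc {n : ℕ} (i : Fin n) (j : ℕ) : Fin n :=
  ⟨((i : ℕ) + j) % n, Nat.mod_lt _ i.pos⟩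

def blockEdges {n : ℕ} (i : Fin n) : Finset (Sym2 (Fin n)) :=
  {s(i, cyc i 3), s(cyc i 1, cyc i 2)}

def antiblockEdges {n : ℕ} (i : Fin n) : Finset (Sym2 (Fin n)) :=
  {s(i, cyc i 1), s(cyc i 2, cyc i 3)}

def IsBlock {n : ℕ} (M : Finset (Sym2 (Fin n))) (i : Fin n) : Prop :=
  blockEdges i ⊆ M

def IsAntiblock {n : ℕ} (M : Finset (Sym2 (Fin n))) (i : Fin n) : Prop :=
  antiblockEdges i ⊆ M

def IsSepPair {n : ℕ} (M S : Finset (Sym2 (Fin n))) : Prop :=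
  (∃ i, S = blockEdges i ∨ S = antiblockEdges i) ∧ S ⊆ M

/-- Insert a block (4 new consecutive points, outer edge and nested inner edge)
into a matching, at the gap after the first `t` points. -/
def insertBlock {n : ℕ} (M : Finset (Sym2 (Fin n))) (t : Fin (n+1)) :
    Finset (Sym2 (Fin (n+4))) :=
  M.image (Sym2.map (fun i : Fin n =>
    if (i : ℕ) < (t : ℕ) then (⟨(i : ℕ), by have := i.isLt; omega⟩ : Fin (n+4))
    else ⟨(i : ℕ) + 4, by have := i.isLt; omega⟩)) ∪
  {s((⟨(t : ℕ), by have := t.isLt; omega⟩ : Fin (n+4)),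
     ⟨(t : ℕ) + 3, by have := t.isLt; omega⟩),
   s((⟨(t : ℕ) + 1, by have := t.isLt; omega⟩ : Fin (n+4)),
     ⟨(t : ℕ) + 2, by have := t.isLt; omega⟩)}

inductive IsIMatching : ∀ n : ℕ, Finset (Sym2 (Fin n)) → Prop
  | base : IsIMatching 2 {s(0, 1)}
  | step {n : ℕ} (M : Finset (Sym2 (Fin n))) (t : Fin (n+1)) :
      IsIMatching n M → IsIMatching (n+4) (insertBlock M t)

inductive IsLMatching : ∀ n : ℕ, Finset (Sym2 (Fin n)) → Prop
  | ring2a : IsLMatching 4 {s(0, 1), s(2, 3)}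
  | ring2b : IsLMatching 4 {s(1, 2), s(3, 0)}
  | ring3a : IsLMatching 6 {s(0, 1), s(2, 3), s(4, 5)}
  | ring3b : IsLMatching 6 {s(1, 2), s(3, 4), s(5, 0)}
  | step {n : ℕ} (M : Finset (Sym2 (Fin n))) (t : Fin (n+1)) :
      IsLMatching n M → IsLMatching (n+4) (insertBlock M t)


private def shiftF {n : ℕ} (c : ℕ) (x : Fin n) : Fin n :=
  ⟨(x.val + c) % n, Nat.mod_lt _ x.pos⟩

private lemma shiftF_left_inv {n c : ℕ} (hc : c ≤ n) (x : Fin n) :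
    shiftF (n - c) (shiftF c x) = x := by
  apply Fin.val_injective
  show ((x.val + c) % n + (n - c)) % n = x.val
  rw [Nat.mod_add_mod]
  have h : x.val + c + (n - c) = x.val + n := by omega
  rw [h, Nat.add_mod_right, Nat.mod_eq_of_lt x.isLt]

private lemma shiftF_inj {n c : ℕ} (hc : c ≤ n) :
    Function.Injective (shiftF (n := n) c) := by
  intro x y h
  have h2 := congrArg (shiftF (n - c)) h
  rwa [shiftF_left_inv hc, shiftF_left_inv hc] at h2

private lemma cross_of_shift_cross {n c : ℕ} (hcn : c < n) (p q x y : Fin n)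
    (h1 : (shiftF c p).val < (shiftF c x).val)
    (h2 : (shiftF c x).val < (shiftF c q).val)
    (h3 : (shiftF c q).val < (shiftF c y).val) :
    Cross s(p,q) s(x,y) ∨ Cross s(x,y) s(p,q) := by
  have hmod : ∀ t : Fin n, (shiftF c t).val = t.val + c ∨
      ((shiftF c t).val = t.val + c - n ∧ n ≤ t.val + c) := by
    intro t
    rcases Nat.lt_or_ge (t.val + c) n with h | h
    · left; show (t.val + c) % n = _; rw [Nat.mod_eq_of_lt h]
    · right
      refine ⟨?_, h⟩
      show (t.val + c) % n = _
      rw [Nat.mod_eq_sub_mod h, Nat.mod_eq_of_lt (by have := t.isLt; omega)]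
  have hp := hmod p; have hq := hmod q; have hx := hmod x; have hy := hmod y
  have hplt := p.isLt; have hqlt := q.isLt; have hxlt := x.isLt; have hylt := y.isLt
  have hD : (p.val < x.val ∧ x.val < q.val ∧ q.val < y.val) ∨
      (x.val < q.val ∧ q.val < y.val ∧ y.val < p.val) ∨
      (q.val < y.val ∧ y.val < p.val ∧ p.val < x.val) ∨
      (y.val < p.val ∧ p.val < x.val ∧ x.val < q.val) := by omega
  rcases hD with ⟨u1,u2,u3⟩|⟨u1,u2,u3⟩|⟨u1,u2,u3⟩|⟨u1,u2,u3⟩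
  · exact Or.inl ⟨p,q,x,y, rfl, rfl, Fin.lt_def.mpr u1, Fin.lt_def.mpr u2, Fin.lt_def.mpr u3⟩
  · exact Or.inr ⟨x,y,q,p, rfl, Sym2.eq_swap, Fin.lt_def.mpr u1, Fin.lt_def.mpr u2, Fin.lt_def.mpr u3⟩
  · exact Or.inl ⟨q,p,y,x, Sym2.eq_swap, Sym2.eq_swap, Fin.lt_def.mpr u1, Fin.lt_def.mpr u2, Fin.lt_def.mpr u3⟩
  · exact Or.inr ⟨y,x,p,q, Sym2.eq_swap, rfl, Fin.lt_def.mpr u1, Fin.lt_def.mpr u2, Fin.lt_def.mpr u3⟩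

private lemma partner_eq {n : ℕ} {M : Finset (Sym2 (Fin n))}
    (hu : ∀ v : Fin n, ∃! e, e ∈ M ∧ v ∈ e)
    {x y w : Fin n} (h1 : s(x,y) ∈ M) (h2 : s(x,w) ∈ M) :
    y = w ∨ (x = w ∧ y = x) := by
  obtain ⟨e', _, hun⟩ := hu x
  have h := (hun _ ⟨h1, Sym2.mem_mk_left x y⟩).trans (hun _ ⟨h2, Sym2.mem_mk_left x w⟩).symm
  rcases Sym2.eq_iff.mp h with ⟨-, h⟩ | ⟨ha, hb⟩
  · exact Or.inl h
  · exact Or.inr ⟨ha, hb⟩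

private lemma interval_lemma {n : ℕ} (M : Finset (Sym2 (Fin n)))
    (hu : ∀ v : Fin n, ∃! e, e ∈ M ∧ v ∈ e)
    (hd : ∀ e ∈ M, ¬ e.IsDiag)
    (hc : ∀ e ∈ M, ∀ f ∈ M, ¬ Cross e f)
    (len lo : ℕ) (hlen : lo + len ≤ n)
    (hcl : ∀ a b : Fin n, s(a,b) ∈ M → lo ≤ a.val → a.val < lo + len →
        lo ≤ b.val ∧ b.val < lo + len) :
      2 ∣ len ∧ (4 ≤ len → ∃ a b c d : Fin n,
        a.val + 1 = b.val ∧ b.val + 1 = c.val ∧ c.val + 1 = d.val ∧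
        lo ≤ a.val ∧ d.val < lo + len ∧
        ((s(a,d) ∈ M ∧ s(b,c) ∈ M) ∨ (s(a,b) ∈ M ∧ s(c,d) ∈ M))) := by
    rcases Nat.eq_zero_or_pos len with rfl | hpos
    · exact ⟨⟨0, rfl⟩, by omega⟩
    have hlon : lo < n := by omega
    obtain ⟨e, ⟨heM, hve⟩, -⟩ := hu (⟨lo, hlon⟩ : Fin n)
    obtain ⟨p, hep⟩ := Sym2.mem_iff_exists.mp hve
    have hvpM : s((⟨lo, hlon⟩ : Fin n), p) ∈ M := by rw [← hep]; exact heM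
    have hvv : (⟨lo, hlon⟩ : Fin n).val = lo := rfl
    have hpv : p.val ≠ lo := by
      intro h
      apply hd e heM
      rw [hep, Sym2.mk_isDiag_iff]
      exact Fin.val_injective h.symm
    have hpI := hcl _ p hvpM le_rfl (show lo < lo + len by omega)
    have hplo : lo < p.val := by omega
    -- left closure
    have hclL : ∀ a b : Fin n, s(a,b) ∈ M → lo + 1 ≤ a.val → a.val < p.val →
        lo + 1 ≤ b.val ∧ b.val < p.val := by
      intro a b hab ha1 ha2
      have hbI := hcl a b hab (by omega) (by omega)
      have hblo : b.val ≠ lo := by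
        intro h
        have hbv : b = (⟨lo, hlon⟩ : Fin n) := Fin.val_injective h
        rw [hbv] at hab
        have h1 : s((⟨lo, hlon⟩ : Fin n), a) ∈ M := by rw [Sym2.eq_swap]; exact hab
        rcases partner_eq hu h1 hvpM with h2 | ⟨h2, -⟩
        · have := congrArg Fin.val h2; omega
        · exact hpv (congrArg Fin.val h2).symm
      have hbp : b.val ≠ p.val := by
        intro h
        have hbp' : b = p := Fin.val_injective h
        rw [hbp'] at hab
        have h1 : s(p, a) ∈ M := by rw [Sym2.eq_swap]; exact hab
        have h2 : s(p, (⟨lo, hlon⟩ : Fin n)) ∈ M := by rw [Sym2.eq_swap]; exact hvpM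
        rcases partner_eq hu h1 h2 with h3 | ⟨h3, -⟩
        · have := congrArg Fin.val h3; omega
        · exact hpv (congrArg Fin.val h3)
      have hble : ¬ (p.val < b.val) := by
        intro h
        exact hc e heM s(a,b) hab ⟨⟨lo, hlon⟩, p, a, b, hep, rfl,
          Fin.lt_def.mpr (show lo < a.val by omega), Fin.lt_def.mpr (by omega),
          Fin.lt_def.mpr (by omega)⟩
      exact ⟨by omega, by omega⟩
    -- right closure
    have hclR : ∀ a b : Fin n, s(a,b) ∈ M → p.val + 1 ≤ a.val → a.val < lo + len →
        p.val + 1 ≤ b.val ∧ b.val < lo + len := by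
      intro a b hab ha1 ha2
      have hbI := hcl a b hab (by omega) ha2
      have hblo : b.val ≠ lo := by
        intro h
        have hbv : b = (⟨lo, hlon⟩ : Fin n) := Fin.val_injective h
        rw [hbv] at hab
        have h1 : s((⟨lo, hlon⟩ : Fin n), a) ∈ M := by rw [Sym2.eq_swap]; exact hab
        rcases partner_eq hu h1 hvpM with h2 | ⟨h2, -⟩
        · have := congrArg Fin.val h2; omega
        · exact hpv (congrArg Fin.val h2).symm
      have hbp : b.val ≠ p.val := by
        intro h
        have hbp' : b = p := Fin.val_injective h
        rw [hbp'] at hab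
        have h1 : s(p, a) ∈ M := by rw [Sym2.eq_swap]; exact hab
        have h2 : s(p, (⟨lo, hlon⟩ : Fin n)) ∈ M := by rw [Sym2.eq_swap]; exact hvpM
        rcases partner_eq hu h1 h2 with h3 | ⟨h3, -⟩
        · have := congrArg Fin.val h3; omega
        · exact hpv (congrArg Fin.val h3)
      have hble : ¬ (b.val < p.val) := by
        intro h
        exact hc e heM s(a,b) hab ⟨⟨lo, hlon⟩, p, b, a, hep, Sym2.eq_swap,
          Fin.lt_def.mpr (show lo < b.val by omega), Fin.lt_def.mpr (by omega),
          Fin.lt_def.mpr (by omega)⟩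
      exact ⟨by omega, by omega⟩
    have hclL' : ∀ a b : Fin n, s(a,b) ∈ M → lo + 1 ≤ a.val →
        a.val < (lo + 1) + (p.val - lo - 1) →
        lo + 1 ≤ b.val ∧ b.val < (lo + 1) + (p.val - lo - 1) := by
      intro a b hab hb1 hb2
      have h := hclL a b hab hb1 (by omega)
      omega
    have hclR' : ∀ a b : Fin n, s(a,b) ∈ M → p.val + 1 ≤ a.val →
        a.val < (p.val + 1) + (lo + len - p.val - 1) →
        p.val + 1 ≤ b.val ∧ b.val < (p.val + 1) + (lo + len - p.val - 1) := by
      intro a b hab hb1 hb2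
      have h := hclR a b hab hb1 (by omega)
      omega
    have IHL := interval_lemma M hu hd hc (p.val - lo - 1) (lo + 1) (by omega) hclL'
    have IHR := interval_lemma M hu hd hc (lo + len - p.val - 1) (p.val + 1) (by omega) hclR'
    obtain ⟨hLd, hLp⟩ := IHL
    obtain ⟨hRd, hRp⟩ := IHR
    have hdvd : 2 ∣ len := by clear * - hLd hRd hpI hplo hlen hpos; omega
    refine ⟨hdvd, ?_⟩
    intro h4
    rcases Nat.lt_or_ge (p.val - lo - 1) 4 with hL4 | hL4
    · have hL02 : p.val = lo + 1 ∨ p.val = lo + 3 := by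
        clear * - hLd hL4 hplo; omega
      rcases hL02 with hpval | hpval
      · rcases Nat.lt_or_ge (lo + len - p.val - 1) 4 with hR4 | hR4
        · have hR2 : lo + len = p.val + 3 := by
            clear * - hRd hR4 h4 hpval hpI; omega
          have hlo2 : lo + 2 < n := by clear * - hR2 hlen hpval; omega
          obtain ⟨e2, ⟨he2M, hwe2⟩, -⟩ := hu (⟨lo + 2, hlo2⟩ : Fin n)
          obtain ⟨q, he2q⟩ := Sym2.mem_iff_exists.mp hwe2
          have hwqM : s((⟨lo + 2, hlo2⟩ : Fin n), q) ∈ M := by rw [← he2q]; exact he2M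
          have hqI := hclR _ q hwqM (show p.val + 1 ≤ lo + 2 by clear * - hpval; omega)
            (show lo + 2 < lo + len by clear * - hR2 hpval; omega)
          have hq : q.val ≠ lo + 2 := by
            intro h
            apply hd e2 he2M
            rw [he2q, Sym2.mk_isDiag_iff]
            exact Fin.val_injective h.symm
          have hqv : q.val = lo + 3 := by clear * - hqI hq hR2 hpval; omega
          have c1 : lo + 1 = p.val := by clear * - hpval; omega
          have c2 : p.val + 1 = lo + 2 := by clear * - hpval; omega
          have c3 : lo + 2 + 1 = q.val := by clear * - hqv; omega
          have c5 : q.val < lo + len := by clear * - hqv hR2 hpval; omega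
          exact ⟨⟨lo, hlon⟩, p, ⟨lo + 2, hlo2⟩, q, c1, c2, c3, le_rfl, c5, Or.inr ⟨hvpM, hwqM⟩⟩
        · obtain ⟨A, B, C, D, q1, q2, q3, q4, q5, q6⟩ := hRp hR4
          have c4 : lo ≤ A.val := by clear * - q4 hplo; omega
          have c5 : D.val < lo + len := by clear * - q5 hpI; omega
          exact ⟨A, B, C, D, q1, q2, q3, c4, c5, q6⟩
      · have hlo1 : lo + 1 < n := by clear * - hpval hpI hlen; omega
        obtain ⟨e2, ⟨he2M, hwe2⟩, -⟩ := hu (⟨lo + 1, hlo1⟩ : Fin n)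
        obtain ⟨q, he2q⟩ := Sym2.mem_iff_exists.mp hwe2
        have hwqM : s((⟨lo + 1, hlo1⟩ : Fin n), q) ∈ M := by rw [← he2q]; exact he2M
        have hqI := hclL _ q hwqM (show lo + 1 ≤ lo + 1 from le_rfl)
          (show lo + 1 < p.val by clear * - hpval; omega)
        have hq : q.val ≠ lo + 1 := by
          intro h
          apply hd e2 he2M
          rw [he2q, Sym2.mk_isDiag_iff]
          exact Fin.val_injective h.symm
        have hqv : q.val = lo + 2 := by clear * - hqI hq hpval; omega
        have c2 : lo + 1 + 1 = q.val := by clear * - hqv; omega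
        have c3 : q.val + 1 = p.val := by clear * - hqv hpval; omega
        have c5 : p.val < lo + len := by clear * - hpval h4; omega
        exact ⟨⟨lo, hlon⟩, ⟨lo + 1, hlo1⟩, q, p, rfl, c2, c3, le_rfl, c5, Or.inl ⟨hvpM, hwqM⟩⟩
    · obtain ⟨A, B, C, D, q1, q2, q3, q4, q5, q6⟩ := hLp hL4
      have c4 : lo ≤ A.val := by clear * - q4; omega
      have c5 : D.val < lo + len := by clear * - q5 hpI; omega
      exact ⟨A, B, C, D, q1, q2, q3, c4, c5, q6⟩
termination_by len
decreasing_by all_goals omega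

private lemma finish_aux {k : ℕ} (hk : 4 ≤ k) (M : Finset (Sym2 (Fin (2*k))))
    (hd : ∀ e ∈ M, ¬ e.IsDiag)
    (hu : ∀ v : Fin (2*k), ∃! e, e ∈ M ∧ v ∈ e)
    (hc : ∀ e ∈ M, ∀ f ∈ M, ¬ Cross e f)
    (i : ℕ) (hi : i + 3 < 2*k)
    (S : Finset (Sym2 (Fin (2*k)))) (hSsep : IsSepPair M S)
    (hScover : ∀ x y : Fin (2*k), s(x,y) ∈ M → i ≤ x.val → x.val ≤ i+3 →
      i ≤ y.val ∧ y.val ≤ i+3)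
    (hSends : ∀ e ∈ S, ∃ x y : Fin (2*k), e = s(x,y) ∧ i ≤ x.val ∧ x.val ≤ i+3 ∧
      i ≤ y.val ∧ y.val ≤ i+3) :
    ∃ S T : Finset (Sym2 (Fin (2*k))),
      IsSepPair M S ∧ IsSepPair M T ∧ Disjoint S T := by
  set c0 : ℕ := 2*k - 4 - i with hc0def
  have hc0lt : c0 < 2*k := by omega
  have hσρ : ∀ x : Fin (2*k), shiftF (2*k - c0) (shiftF c0 x) = x :=
    fun x => shiftF_left_inv (by omega) x
  have hρσ : ∀ x : Fin (2*k), shiftF c0 (shiftF (2*k - c0) x) = x := by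
    intro x
    have h := shiftF_left_inv (n := 2*k) (c := 2*k - c0) (by omega) x
    rwa [show 2*k - (2*k - c0) = c0 by omega] at h
  set Mr : Finset (Sym2 (Fin (2*k))) := M.image (Sym2.map (shiftF c0)) with hMrdef
  have hρinj : Function.Injective (shiftF (n := 2*k) c0) := shiftF_inj (by omega)
  -- pulling lemmas
  have map_pull_eq : ∀ (z : Sym2 (Fin (2*k))) (α β : Fin (2*k)),
      Sym2.map (shiftF c0) z = s(α, β) → z = s(shiftF (2*k - c0) α, shiftF (2*k - c0) β) := by
    intro z
    induction z using Sym2.ind with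
    | _ u w =>
      intro α β h
      rw [Sym2.map_pair_eq] at h
      rcases Sym2.eq_iff.mp h with ⟨h1, h2⟩ | ⟨h1, h2⟩
      · rw [← h1, ← h2, hσρ, hσρ]
      · rw [← h1, ← h2, hσρ, hσρ]
        exact Sym2.eq_swap
  have mem_pull : ∀ (z : Sym2 (Fin (2*k))) (v : Fin (2*k)),
      v ∈ Sym2.map (shiftF c0) z → shiftF (2*k - c0) v ∈ z := by
    intro z
    induction z using Sym2.ind with
    | _ u w =>
      intro v hv
      rw [Sym2.map_pair_eq, Sym2.mem_iff] at hv
      rw [Sym2.mem_iff]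
      rcases hv with h | h
      · left; rw [h]; exact hσρ u
      · right; rw [h]; exact hσρ w
  have memMr : ∀ x y : Fin (2*k), s(x,y) ∈ Mr →
      s(shiftF (2*k - c0) x, shiftF (2*k - c0) y) ∈ M := by
    intro x y h
    rw [hMrdef, Finset.mem_image] at h
    obtain ⟨e, heM, he⟩ := h
    rw [map_pull_eq e x y he] at heM
    exact heM
  -- matching properties of Mr
  have hd_r : ∀ e ∈ Mr, ¬ e.IsDiag := by
    intro e he
    rw [hMrdef, Finset.mem_image] at he
    obtain ⟨e0, he0M, rfl⟩ := he
    intro hdiag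
    apply hd e0 he0M
    revert hdiag
    induction e0 using Sym2.ind with
    | _ u w =>
      intro hdiag
      rw [Sym2.map_pair_eq, Sym2.mk_isDiag_iff] at hdiag
      rw [Sym2.mk_isDiag_iff]
      exact hρinj hdiag
  have hu_r : ∀ v : Fin (2*k), ∃! e, e ∈ Mr ∧ v ∈ e := by
    intro v
    obtain ⟨e0, ⟨he0M, hve0⟩, hun0⟩ := hu (shiftF (2*k - c0) v)
    obtain ⟨w, he0⟩ := Sym2.mem_iff_exists.mp hve0
    have hmap : Sym2.map (shiftF c0) e0 = s(v, shiftF c0 w) := by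
      rw [he0, Sym2.map_pair_eq, hρσ v]
    refine ⟨s(v, shiftF c0 w), ⟨?_, Sym2.mem_mk_left _ _⟩, ?_⟩
    · rw [hMrdef, ← hmap]
      exact Finset.mem_image_of_mem _ he0M
    · rintro e' ⟨he'M, hve'⟩
      rw [hMrdef, Finset.mem_image] at he'M
      obtain ⟨e1, he1M, he1⟩ := he'M
      have hσv : shiftF (2*k - c0) v ∈ e1 := mem_pull e1 v (by rw [he1]; exact hve')
      have he10 : e1 = e0 := hun0 e1 ⟨he1M, hσv⟩
      rw [← he1, he10, hmap]
  have hc_r : ∀ e ∈ Mr, ∀ f ∈ Mr, ¬ Cross e f := by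
    intro e he f hf hcr
    rw [hMrdef, Finset.mem_image] at he hf
    obtain ⟨e0, he0M, he0⟩ := he
    obtain ⟨f0, hf0M, hf0⟩ := hf
    obtain ⟨α, β, γ, δ, hq1, hq2, l1, l2, l3⟩ := hcr
    have he0' : e0 = s(shiftF (2*k - c0) α, shiftF (2*k - c0) β) :=
      map_pull_eq _ _ _ (by rw [he0, hq1])
    have hf0' : f0 = s(shiftF (2*k - c0) γ, shiftF (2*k - c0) δ) :=
      map_pull_eq _ _ _ (by rw [hf0, hq2])
    have m1 : (shiftF c0 (shiftF (2*k - c0) α)).val < (shiftF c0 (shiftF (2*k - c0) γ)).val := by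
      simp only [hρσ]; exact Fin.lt_def.mp l1
    have m2 : (shiftF c0 (shiftF (2*k - c0) γ)).val < (shiftF c0 (shiftF (2*k - c0) β)).val := by
      simp only [hρσ]; exact Fin.lt_def.mp l2
    have m3 : (shiftF c0 (shiftF (2*k - c0) β)).val < (shiftF c0 (shiftF (2*k - c0) δ)).val := by
      simp only [hρσ]; exact Fin.lt_def.mp l3
    have hres := cross_of_shift_cross hc0lt _ _ _ _ m1 m2 m3
    rw [← he0', ← hf0'] at hres
    rcases hres with h | h
    · exact hc e0 he0M f0 hf0M h
    · exact hc f0 hf0M e0 he0M h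
  -- window transfer facts
  have hout : ∀ x : Fin (2*k), 2*k - 4 ≤ x.val →
      i ≤ (shiftF (2*k - c0) x).val ∧ (shiftF (2*k - c0) x).val ≤ i + 3 := by
    intro x hx
    have hlt := x.isLt
    have hval : (shiftF (2*k - c0) x).val = (x.val + (2*k - c0)) % (2*k) := rfl
    have hsub : (x.val + (2*k - c0)) % (2*k) = x.val + (2*k - c0) - 2*k := by
      rw [Nat.mod_eq_sub_mod (by omega), Nat.mod_eq_of_lt (by omega)]
    omega
  have hin : ∀ x : Fin (2*k), x.val < 2*k - 4 →
      ¬ (i ≤ (shiftF (2*k - c0) x).val ∧ (shiftF (2*k - c0) x).val ≤ i + 3) := by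
    intro x hx
    have hval : (shiftF (2*k - c0) x).val = (x.val + (2*k - c0)) % (2*k) := rfl
    rcases Nat.lt_or_ge (x.val + (2*k - c0)) (2*k) with h | h
    · rw [Nat.mod_eq_of_lt h] at hval
      omega
    · have hsub : (x.val + (2*k - c0)) % (2*k) = x.val + (2*k - c0) - 2*k := by
        rw [Nat.mod_eq_sub_mod h, Nat.mod_eq_of_lt (by omega)]
      omega
  have hcl_r : ∀ a b : Fin (2*k), s(a,b) ∈ Mr → 0 ≤ a.val → a.val < 0 + (2*k - 4) →
      0 ≤ b.val ∧ b.val < 0 + (2*k - 4) := by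
    intro a b hab h0 ha
    refine ⟨Nat.zero_le _, ?_⟩
    by_contra hb
    have hb' : 2*k - 4 ≤ b.val := by omega
    have hM0 := memMr a b hab
    have hσb := hout b hb'
    have hσa := hScover _ _ (by rw [Sym2.eq_swap]; exact hM0) hσb.1 hσb.2
    exact hin a (by omega) hσa
  obtain ⟨-, hp2⟩ := interval_lemma Mr hu_r hd_r hc_r (2*k - 4) 0 (by omega) hcl_r
  obtain ⟨a', b', c', d', h1, h2, h3, -, hlt', hT⟩ := hp2 (by omega)
  have ha'lt : a'.val < 2*k - 4 := by omega
  have hb'lt : b'.val < 2*k - 4 := by omega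
  have hc'lt : c'.val < 2*k - 4 := by omega
  have hd'lt : d'.val < 2*k - 4 := by omega
  have hj1 : shiftF (2*k - c0) b' = cyc (shiftF (2*k - c0) a') 1 := by
    apply Fin.val_injective
    show (b'.val + (2*k - c0)) % (2*k) = ((a'.val + (2*k - c0)) % (2*k) + 1) % (2*k)
    rw [Nat.mod_add_mod]
    congr 1
    omega
  have hj2 : shiftF (2*k - c0) c' = cyc (shiftF (2*k - c0) a') 2 := by
    apply Fin.val_injective
    show (c'.val + (2*k - c0)) % (2*k) = ((a'.val + (2*k - c0)) % (2*k) + 2) % (2*k)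
    rw [Nat.mod_add_mod]
    congr 1
    omega
  have hj3 : shiftF (2*k - c0) d' = cyc (shiftF (2*k - c0) a') 3 := by
    apply Fin.val_injective
    show (d'.val + (2*k - c0)) % (2*k) = ((a'.val + (2*k - c0)) % (2*k) + 3) % (2*k)
    rw [Nat.mod_add_mod]
    congr 1
    omega
  have houta' := hin a' ha'lt
  have houtb' := hin b' hb'lt
  have houtc' := hin c' hc'lt
  have houtd' := hin d' hd'lt
  rcases hT with ⟨hT1, hT2⟩ | ⟨hT1, hT2⟩
  · -- block
    have hM1 := memMr a' d' hT1
    have hM2 := memMr b' c' hT2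
    have hTeq : blockEdges (shiftF (2*k - c0) a') =
        {s(shiftF (2*k - c0) a', shiftF (2*k - c0) d'),
         s(shiftF (2*k - c0) b', shiftF (2*k - c0) c')} := by
      simp only [blockEdges]
      rw [← hj1, ← hj2, ← hj3]
    refine ⟨S, blockEdges (shiftF (2*k - c0) a'), hSsep, ⟨⟨_, Or.inl rfl⟩, ?_⟩, ?_⟩
    · rw [hTeq]
      intro e he
      rcases Finset.mem_insert.mp he with rfl | he
      · exact hM1
      · rw [Finset.mem_singleton.mp he]
        exact hM2
    · refine Finset.disjoint_left.mpr ?_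
      intro e heS heT
      obtain ⟨x, y, rfl, hx1, hx2, hy1, hy2⟩ := hSends e heS
      rw [hTeq] at heT
      rcases Finset.mem_insert.mp heT with h | h
      · rcases Sym2.eq_iff.mp h with ⟨hq, -⟩ | ⟨hq, -⟩
        · exact houta' (by rw [← hq]; exact ⟨hx1, hx2⟩)
        · exact houtd' (by rw [← hq]; exact ⟨hx1, hx2⟩)
      · rcases Sym2.eq_iff.mp (Finset.mem_singleton.mp h) with ⟨hq, -⟩ | ⟨hq, -⟩
        · exact houtb' (by rw [← hq]; exact ⟨hx1, hx2⟩)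
        · exact houtc' (by rw [← hq]; exact ⟨hx1, hx2⟩)
  · -- antiblock
    have hM1 := memMr a' b' hT1
    have hM2 := memMr c' d' hT2
    have hTeq : antiblockEdges (shiftF (2*k - c0) a') =
        {s(shiftF (2*k - c0) a', shiftF (2*k - c0) b'),
         s(shiftF (2*k - c0) c', shiftF (2*k - c0) d')} := by
      simp only [antiblockEdges]
      rw [← hj1, ← hj2, ← hj3]
    refine ⟨S, antiblockEdges (shiftF (2*k - c0) a'), hSsep, ⟨⟨_, Or.inr rfl⟩, ?_⟩, ?_⟩
    · rw [hTeq]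
      intro e he
      rcases Finset.mem_insert.mp he with rfl | he
      · exact hM1
      · rw [Finset.mem_singleton.mp he]
        exact hM2
    · refine Finset.disjoint_left.mpr ?_
      intro e heS heT
      obtain ⟨x, y, rfl, hx1, hx2, hy1, hy2⟩ := hSends e heS
      rw [hTeq] at heT
      rcases Finset.mem_insert.mp heT with h | h
      · rcases Sym2.eq_iff.mp h with ⟨hq, -⟩ | ⟨hq, -⟩
        · exact houta' (by rw [← hq]; exact ⟨hx1, hx2⟩)
        · exact houtb' (by rw [← hq]; exact ⟨hx1, hx2⟩)
      · rcases Sym2.eq_iff.mp (Finset.mem_singleton.mp h) with ⟨hq, -⟩ | ⟨hq, -⟩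
        · exact houtc' (by rw [← hq]; exact ⟨hx1, hx2⟩)
        · exact houtd' (by rw [← hq]; exact ⟨hx1, hx2⟩)


/-- Every non-crossing perfect matching of `2k` points, `k ≥ 4`, contains two
disjoint separated pairs (each a block or an antiblock). -/
theorem exists_two_disjoint_sepPairs (k : ℕ) (hk : 4 ≤ k)
    (M : Finset (Sym2 (Fin (2 * k)))) (hM : IsNCMatching M) :
    ∃ S T : Finset (Sym2 (Fin (2 * k))),
      IsSepPair M S ∧ IsSepPair M T ∧ Disjoint S T := by
  obtain ⟨hd, hu, hc⟩ := hM
  obtain ⟨-, hp⟩ := interval_lemma M hu hd hc (2*k) 0 (by omega)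
    (fun a b _ _ _ => ⟨Nat.zero_le _, by have := b.isLt; omega⟩)
  obtain ⟨a, b, c, d, h1, h2, h3, -, hdlt, hS⟩ := hp (by omega)
  have hdlt' : a.val + 3 < 2*k := by omega
  have hca1 : cyc a 1 = b := Fin.val_injective
    (by show (a.val + 1) % (2*k) = b.val; rw [Nat.mod_eq_of_lt (by omega)]; omega)
  have hca2 : cyc a 2 = c := Fin.val_injective
    (by show (a.val + 2) % (2*k) = c.val; rw [Nat.mod_eq_of_lt (by omega)]; omega)
  have hca3 : cyc a 3 = d := Fin.val_injective
    (by show (a.val + 3) % (2*k) = d.val; rw [Nat.mod_eq_of_lt (by omega)]; omega)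
  have hmem : ∀ x : Fin (2*k), a.val ≤ x.val → x.val ≤ a.val + 3 →
      x = a ∨ x = b ∨ x = c ∨ x = d := by
    intro x hx1 hx2
    have h : x.val = a.val ∨ x.val = b.val ∨ x.val = c.val ∨ x.val = d.val := by omega
    rcases h with h|h|h|h
    exacts [Or.inl (Fin.val_injective h), Or.inr (Or.inl (Fin.val_injective h)),
      Or.inr (Or.inr (Or.inl (Fin.val_injective h))),
      Or.inr (Or.inr (Or.inr (Fin.val_injective h)))]
  rcases hS with ⟨hS1, hS2⟩ | ⟨hS1, hS2⟩
  · -- block case: s(a,d), s(b,c) ∈ M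
    have hSeq : blockEdges a = {s(a,d), s(b,c)} := by
      simp only [blockEdges]
      rw [hca1, hca2, hca3]
    have hS1' : s(d,a) ∈ M := by rw [Sym2.eq_swap]; exact hS1
    have hS2' : s(c,b) ∈ M := by rw [Sym2.eq_swap]; exact hS2
    have hScover : ∀ x y : Fin (2*k), s(x,y) ∈ M → a.val ≤ x.val → x.val ≤ a.val+3 →
        a.val ≤ y.val ∧ y.val ≤ a.val+3 := by
      intro x y hxy hx1 hx2
      rcases hmem x hx1 hx2 with rfl | rfl | rfl | rfl
      · rcases partner_eq hu hxy hS1 with h | ⟨-, h⟩ <;>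
          · have := congrArg Fin.val h; omega
      · rcases partner_eq hu hxy hS2 with h | ⟨-, h⟩ <;>
          · have := congrArg Fin.val h; omega
      · rcases partner_eq hu hxy hS2' with h | ⟨-, h⟩ <;>
          · have := congrArg Fin.val h; omega
      · rcases partner_eq hu hxy hS1' with h | ⟨-, h⟩ <;>
          · have := congrArg Fin.val h; omega
    have hSends : ∀ e ∈ blockEdges a, ∃ x y : Fin (2*k), e = s(x,y) ∧
        a.val ≤ x.val ∧ x.val ≤ a.val+3 ∧ a.val ≤ y.val ∧ y.val ≤ a.val+3 := by
      intro e he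
      rw [hSeq] at he
      rcases Finset.mem_insert.mp he with rfl | he
      · exact ⟨a, d, rfl, le_rfl, by omega, by omega, by omega⟩
      · rw [Finset.mem_singleton.mp he]
        exact ⟨b, c, rfl, by omega, by omega, by omega, by omega⟩
    have hSsep : IsSepPair M (blockEdges a) := by
      refine ⟨⟨a, Or.inl rfl⟩, ?_⟩
      rw [hSeq]
      intro e he
      rcases Finset.mem_insert.mp he with rfl | he
      · exact hS1
      · rw [Finset.mem_singleton.mp he]; exact hS2
    exact finish_aux hk M hd hu hc a.val hdlt' (blockEdges a) hSsep hScover hSends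
  · -- antiblock case: s(a,b), s(c,d) ∈ M
    have hSeq : antiblockEdges a = {s(a,b), s(c,d)} := by
      simp only [antiblockEdges]
      rw [hca1, hca2, hca3]
    have hS1' : s(b,a) ∈ M := by rw [Sym2.eq_swap]; exact hS1
    have hS2' : s(d,c) ∈ M := by rw [Sym2.eq_swap]; exact hS2
    have hScover : ∀ x y : Fin (2*k), s(x,y) ∈ M → a.val ≤ x.val → x.val ≤ a.val+3 →
        a.val ≤ y.val ∧ y.val ≤ a.val+3 := by
      intro x y hxy hx1 hx2
      rcases hmem x hx1 hx2 with rfl | rfl | rfl | rfl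
      · rcases partner_eq hu hxy hS1 with h | ⟨-, h⟩ <;>
          · have := congrArg Fin.val h; omega
      · rcases partner_eq hu hxy hS1' with h | ⟨-, h⟩ <;>
          · have := congrArg Fin.val h; omega
      · rcases partner_eq hu hxy hS2 with h | ⟨-, h⟩ <;>
          · have := congrArg Fin.val h; omega
      · rcases partner_eq hu hxy hS2' with h | ⟨-, h⟩ <;>
          · have := congrArg Fin.val h; omega
    have hSends : ∀ e ∈ antiblockEdges a, ∃ x y : Fin (2*k), e = s(x,y) ∧
        a.val ≤ x.val ∧ x.val ≤ a.val+3 ∧ a.val ≤ y.val ∧ y.val ≤ a.val+3 := by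
      intro e he
      rw [hSeq] at he
      rcases Finset.mem_insert.mp he with rfl | he
      · exact ⟨a, b, rfl, le_rfl, by omega, by omega, by omega⟩
      · rw [Finset.mem_singleton.mp he]
        exact ⟨c, d, rfl, by omega, by omega, by omega, by omega⟩
    have hSsep : IsSepPair M (antiblockEdges a) := by
      refine ⟨⟨a, Or.inr rfl⟩, ?_⟩
      rw [hSeq]
      intro e he
      rcases Finset.mem_insert.mp he with rfl | he
      · exact hS1
      · rw [Finset.mem_singleton.mp he]; exact hS2
    exact finish_aux hk M hd hu hc a.val hdlt' (antiblockEdges a) hSsep hScover hSends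
end

section
/- Every non-crossing perfect matching of even size k ≥ 1 (i.e., of 2k points in convex position with k even) has at least one disjoint compatible non-crossing perfect matching. -/
set_option linter.unreachableTactic false
set_option linter.unusedTactic false

section DisjCompatProof
lemma cross_iff {n : ℕ} (x y z w : Fin n) :
    Cross s(x,y) s(z,w) ↔
      (x < z ∧ z < y ∧ y < w) ∨ (x < w ∧ w < y ∧ y < z) ∨
      (y < z ∧ z < x ∧ x < w) ∨ (y < w ∧ w < x ∧ x < z) := by
  constructor
  · rintro ⟨a, b, c, d, he, hf, h1, h2, h3⟩
    rw [Sym2.eq_iff] at he hf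
    rcases he with ⟨rfl, rfl⟩ | ⟨rfl, rfl⟩ <;> rcases hf with ⟨rfl, rfl⟩ | ⟨rfl, rfl⟩ <;> tauto
  · rintro (⟨h1,h2,h3⟩|⟨h1,h2,h3⟩|⟨h1,h2,h3⟩|⟨h1,h2,h3⟩)
    · exact ⟨x,y,z,w, rfl, rfl, h1,h2,h3⟩
    · exact ⟨x,y,w,z, rfl, Sym2.eq_swap, h1,h2,h3⟩
    · exact ⟨y,x,z,w, Sym2.eq_swap, rfl, h1,h2,h3⟩
    · exact ⟨y,x,w,z, Sym2.eq_swap, Sym2.eq_swap, h1,h2,h3⟩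

lemma cross_map_iff {n m : ℕ} (f : Fin n → Fin m) (hf : StrictMono f) (e e' : Sym2 (Fin n)) :
    Cross (Sym2.map f e) (Sym2.map f e') ↔ Cross e e' := by
  induction e using Sym2.ind with | _ x y =>
  induction e' using Sym2.ind with | _ z w =>
  rw [Sym2.map_pair_eq, Sym2.map_pair_eq, cross_iff, cross_iff]
  simp [hf.lt_iff_lt]

lemma exists_mem_sym2 {α : Type*} (e : Sym2 α) : ∃ v, v ∈ e := by
  induction e using Sym2.ind with | _ x y => exact ⟨x, Sym2.mem_mk_left _ _⟩

lemma isDiag_map_of {α β : Type*} {f : α → β} {e : Sym2 α} (h : e.IsDiag) :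
    (Sym2.map f e).IsDiag := by
  induction e using Sym2.ind with | _ x y =>
  rw [Sym2.mk_isDiag_iff] at h
  rw [Sym2.map_pair_eq, Sym2.mk_isDiag_iff, h]
def psi (n i : ℕ) : Fin n → Fin (n+4) := fun v =>
  if (v:ℕ) < i then ⟨v, by have := v.isLt; omega⟩ else ⟨(v:ℕ)+4, by have := v.isLt; omega⟩

lemma psi_val {n i : ℕ} (v : Fin n) :
    ((psi n i v : Fin (n+4)) : ℕ) = if (v:ℕ) < i then (v:ℕ) else (v:ℕ)+4 := by
  unfold psi; split <;> rfl

lemma psi_out {n i : ℕ} (v : Fin n) : ((psi n i v):ℕ) < i ∨ i+4 ≤ ((psi n i v):ℕ) := by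
  rw [psi_val]; split <;> omega

lemma psi_strictMono {n i : ℕ} : StrictMono (psi n i) := by
  intro a b h
  rw [Fin.lt_def] at h ⊢
  rw [psi_val, psi_val]
  split <;> split <;> omega

lemma psi_inj {n i : ℕ} : Function.Injective (psi n i) := psi_strictMono.injective

lemma psi_surj {n i : ℕ} (hi : i ≤ n) (v : Fin (n+4)) (hv : (v:ℕ) < i ∨ i+4 ≤ (v:ℕ)) :
    ∃ w, psi n i w = v := by
  rcases hv with hv | hv
  · exact ⟨⟨v, by omega⟩, by apply Fin.ext; rw [psi_val]; simp [hv]⟩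
  · refine ⟨⟨(v:ℕ)-4, by have := v.isLt; omega⟩, ?_⟩
    apply Fin.ext; rw [psi_val]
    have : ¬ ((v:ℕ) - 4 < i) := by omega
    simp only [this, if_false]
    have := v.isLt; omega

lemma exists_preimage_edge {n i : ℕ} (hi : i ≤ n) (e : Sym2 (Fin (n+4)))
    (he : ∀ v ∈ e, (v:ℕ) < i ∨ i+4 ≤ (v:ℕ)) : ∃ e₀, Sym2.map (psi n i) e₀ = e := by
  induction e using Sym2.ind with | _ x y =>
  obtain ⟨wx, hwx⟩ := psi_surj hi x (he x (Sym2.mem_mk_left _ _))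
  obtain ⟨wy, hwy⟩ := psi_surj hi y (he y (Sym2.mem_mk_right _ _))
  exact ⟨s(wx, wy), by rw [Sym2.map_pair_eq, hwx, hwy]⟩

def bSet (n i : ℕ) (hi : i ≤ n) : Finset (Sym2 (Fin (n+4))) :=
  {s(⟨i, by omega⟩, ⟨i+3, by omega⟩), s(⟨i+1, by omega⟩, ⟨i+2, by omega⟩)}

def aSet (n i : ℕ) (hi : i ≤ n) : Finset (Sym2 (Fin (n+4))) :=
  {s(⟨i, by omega⟩, ⟨i+1, by omega⟩), s(⟨i+2, by omega⟩, ⟨i+3, by omega⟩)}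

lemma bSet_w {n i : ℕ} (hi : i ≤ n) :
    ∀ e ∈ bSet n i hi, ∀ v ∈ e, i ≤ (v:ℕ) ∧ (v:ℕ) ≤ i+3 := by
  intro e he v hv
  simp only [bSet, Finset.mem_insert, Finset.mem_singleton] at he
  rcases he with rfl | rfl <;> rw [Sym2.mem_iff] at hv <;>
    rcases hv with rfl | rfl <;> simp <;> try omega

lemma aSet_w {n i : ℕ} (hi : i ≤ n) :
    ∀ e ∈ aSet n i hi, ∀ v ∈ e, i ≤ (v:ℕ) ∧ (v:ℕ) ≤ i+3 := by
  intro e he v hv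
  simp only [aSet, Finset.mem_insert, Finset.mem_singleton] at he
  rcases he with rfl | rfl <;> rw [Sym2.mem_iff] at hv <;>
    rcases hv with rfl | rfl <;> simp <;> try omega

lemma bSet_diag {n i : ℕ} (hi : i ≤ n) : ∀ e ∈ bSet n i hi, ¬ e.IsDiag := by
  intro e he
  simp only [bSet, Finset.mem_insert, Finset.mem_singleton] at he
  rcases he with rfl | rfl <;> rw [Sym2.mk_isDiag_iff] <;>
    intro h <;> rw [Fin.ext_iff] at h <;> simp at h

lemma aSet_diag {n i : ℕ} (hi : i ≤ n) : ∀ e ∈ aSet n i hi, ¬ e.IsDiag := by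
  intro e he
  simp only [aSet, Finset.mem_insert, Finset.mem_singleton] at he
  rcases he with rfl | rfl <;> rw [Sym2.mk_isDiag_iff] <;>
    intro h <;> rw [Fin.ext_iff] at h <;> simp at h

lemma bSet_cross {n i : ℕ} (hi : i ≤ n) :
    ∀ e ∈ bSet n i hi, ∀ f ∈ bSet n i hi, ¬ Cross e f := by
  intro e he f hf
  simp only [bSet, Finset.mem_insert, Finset.mem_singleton] at he hf
  rcases he with rfl | rfl <;> rcases hf with rfl | rfl <;>
    (rw [cross_iff]; simp only [Fin.lt_def]; simp; try omega)

lemma aSet_cross {n i : ℕ} (hi : i ≤ n) :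
    ∀ e ∈ aSet n i hi, ∀ f ∈ aSet n i hi, ¬ Cross e f := by
  intro e he f hf
  simp only [aSet, Finset.mem_insert, Finset.mem_singleton] at he hf
  rcases he with rfl | rfl <;> rcases hf with rfl | rfl <;>
    (rw [cross_iff]; simp only [Fin.lt_def]; simp; try omega)

lemma ba_disj {n i : ℕ} (hi : i ≤ n) : ∀ e ∈ bSet n i hi, e ∉ aSet n i hi := by
  intro e he hf
  simp only [bSet, Finset.mem_insert, Finset.mem_singleton] at he
  simp only [aSet, Finset.mem_insert, Finset.mem_singleton] at hf
  rcases he with rfl | rfl <;> rcases hf with h | h <;>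
    (rw [Sym2.eq_iff] at h; simp only [Fin.ext_iff] at h; simp at h; try omega)

lemma ba_cross {n i : ℕ} (hi : i ≤ n) :
    ∀ e ∈ bSet n i hi, ∀ f ∈ aSet n i hi, ¬ Cross e f ∧ ¬ Cross f e := by
  intro e he f hf
  simp only [bSet, Finset.mem_insert, Finset.mem_singleton] at he
  simp only [aSet, Finset.mem_insert, Finset.mem_singleton] at hf
  rcases he with rfl | rfl <;> rcases hf with rfl | rfl <;>
    constructor <;> (rw [cross_iff]; simp only [Fin.lt_def]; simp; try omega)

lemma cross_window {n i : ℕ} {e f : Sym2 (Fin n)}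
    (he : ∀ v ∈ e, (v:ℕ) < i ∨ i+4 ≤ (v:ℕ)) (hf : ∀ v ∈ f, i ≤ (v:ℕ) ∧ (v:ℕ) ≤ i+3) :
    ¬ Cross e f ∧ ¬ Cross f e := by
  induction e using Sym2.ind with | _ x y =>
  induction f using Sym2.ind with | _ z w =>
  have hx := he x (Sym2.mem_mk_left _ _)
  have hy := he y (Sym2.mem_mk_right _ _)
  have hz := hf z (Sym2.mem_mk_left _ _)
  have hw := hf w (Sym2.mem_mk_right _ _)
  constructor <;> (rw [cross_iff]; simp only [Fin.lt_def]; omega)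
lemma bSet_cov {n i : ℕ} (hi : i ≤ n) :
    ∀ v : Fin (n+4), i ≤ (v:ℕ) → (v:ℕ) ≤ i+3 → ∃! e, e ∈ bSet n i hi ∧ v ∈ e := by
  intro v h1 h2
  have h4 : (v:ℕ) = i ∨ (v:ℕ) = i+1 ∨ (v:ℕ) = i+2 ∨ (v:ℕ) = i+3 := by omega
  have huniq : ∀ e₁, e₁ ∈ bSet n i hi → v ∈ e₁ →
      ∀ f, (f ∈ bSet n i hi ∧ v ∈ f) → f = e₁ := by
    rintro e₁ he₁ hve₁ f ⟨hf, hvf⟩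
    simp only [bSet, Finset.mem_insert, Finset.mem_singleton] at hf he₁
    rcases hf with rfl | rfl <;> rcases he₁ with rfl | rfl <;> try rfl
    all_goals
      exfalso <;> rw [Sym2.mem_iff] at hvf hve₁ <;>
      rcases hvf with h' | h' <;> rcases hve₁ with h'' | h'' <;>
      rw [Fin.ext_iff] at h' h'' <;> simp at h' h'' <;> omega
  rcases h4 with h | h | h | h
  · refine ⟨s(⟨i, by omega⟩, ⟨i+3, by omega⟩), ⟨by simp [bSet], Sym2.mem_iff.2 (Or.inl (Fin.ext h))⟩,
      huniq _ (by simp [bSet]) (Sym2.mem_iff.2 (Or.inl (Fin.ext h)))⟩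
  · refine ⟨s(⟨i+1, by omega⟩, ⟨i+2, by omega⟩), ⟨by simp [bSet], Sym2.mem_iff.2 (Or.inl (Fin.ext h))⟩,
      huniq _ (by simp [bSet]) (Sym2.mem_iff.2 (Or.inl (Fin.ext h)))⟩
  · refine ⟨s(⟨i+1, by omega⟩, ⟨i+2, by omega⟩), ⟨by simp [bSet], Sym2.mem_iff.2 (Or.inr (Fin.ext h))⟩,
      huniq _ (by simp [bSet]) (Sym2.mem_iff.2 (Or.inr (Fin.ext h)))⟩
  · refine ⟨s(⟨i, by omega⟩, ⟨i+3, by omega⟩), ⟨by simp [bSet], Sym2.mem_iff.2 (Or.inr (Fin.ext h))⟩,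
      huniq _ (by simp [bSet]) (Sym2.mem_iff.2 (Or.inr (Fin.ext h)))⟩

lemma aSet_cov {n i : ℕ} (hi : i ≤ n) :
    ∀ v : Fin (n+4), i ≤ (v:ℕ) → (v:ℕ) ≤ i+3 → ∃! e, e ∈ aSet n i hi ∧ v ∈ e := by
  intro v h1 h2
  have h4 : (v:ℕ) = i ∨ (v:ℕ) = i+1 ∨ (v:ℕ) = i+2 ∨ (v:ℕ) = i+3 := by omega
  have huniq : ∀ e₁, e₁ ∈ aSet n i hi → v ∈ e₁ →
      ∀ f, (f ∈ aSet n i hi ∧ v ∈ f) → f = e₁ := by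
    rintro e₁ he₁ hve₁ f ⟨hf, hvf⟩
    simp only [aSet, Finset.mem_insert, Finset.mem_singleton] at hf he₁
    rcases hf with rfl | rfl <;> rcases he₁ with rfl | rfl <;> try rfl
    all_goals
      exfalso <;> rw [Sym2.mem_iff] at hvf hve₁ <;>
      rcases hvf with h' | h' <;> rcases hve₁ with h'' | h'' <;>
      rw [Fin.ext_iff] at h' h'' <;> simp at h' h'' <;> omega
  rcases h4 with h | h | h | h
  · refine ⟨s(⟨i, by omega⟩, ⟨i+1, by omega⟩), ⟨by simp [aSet], Sym2.mem_iff.2 (Or.inl (Fin.ext h))⟩,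
      huniq _ (by simp [aSet]) (Sym2.mem_iff.2 (Or.inl (Fin.ext h)))⟩
  · refine ⟨s(⟨i, by omega⟩, ⟨i+1, by omega⟩), ⟨by simp [aSet], Sym2.mem_iff.2 (Or.inr (Fin.ext h))⟩,
      huniq _ (by simp [aSet]) (Sym2.mem_iff.2 (Or.inr (Fin.ext h)))⟩
  · refine ⟨s(⟨i+2, by omega⟩, ⟨i+3, by omega⟩), ⟨by simp [aSet], Sym2.mem_iff.2 (Or.inl (Fin.ext h))⟩,
      huniq _ (by simp [aSet]) (Sym2.mem_iff.2 (Or.inl (Fin.ext h)))⟩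
  · refine ⟨s(⟨i+2, by omega⟩, ⟨i+3, by omega⟩), ⟨by simp [aSet], Sym2.mem_iff.2 (Or.inr (Fin.ext h))⟩,
      huniq _ (by simp [aSet]) (Sym2.mem_iff.2 (Or.inr (Fin.ext h)))⟩
lemma img_outside {n i : ℕ} {M₀ : Finset (Sym2 (Fin n))} {e : Sym2 (Fin (n+4))}
    (he : e ∈ M₀.image (Sym2.map (psi n i))) :
    ∀ v ∈ e, (v:ℕ) < i ∨ i+4 ≤ (v:ℕ) := by
  obtain ⟨e₀, _, rfl⟩ := Finset.mem_image.1 he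
  intro v hv
  obtain ⟨u, _, rfl⟩ := Sym2.mem_map.1 hv
  exact psi_out u

lemma step_nc {n i : ℕ} (hi : i ≤ n) {M₀ : Finset (Sym2 (Fin n))} (hM₀ : IsNCMatching M₀)
    {E : Finset (Sym2 (Fin (n+4)))}
    (hEw : ∀ e ∈ E, ∀ v ∈ e, i ≤ (v:ℕ) ∧ (v:ℕ) ≤ i+3)
    (hEm : ∀ v : Fin (n+4), i ≤ (v:ℕ) → (v:ℕ) ≤ i+3 → ∃! e, e ∈ E ∧ v ∈ e)
    (hEd : ∀ e ∈ E, ¬ e.IsDiag)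
    (hEc : ∀ e ∈ E, ∀ f ∈ E, ¬ Cross e f) :
    IsNCMatching (M₀.image (Sym2.map (psi n i)) ∪ E) := by
  refine ⟨?_, ?_, ?_⟩
  · intro e he
    rcases Finset.mem_union.1 he with he | he
    · obtain ⟨e₀, he₀, rfl⟩ := Finset.mem_image.1 he
      intro hd
      -- map ψ e₀ diag → e₀ diag
      induction e₀ using Sym2.ind with | _ x y =>
      rw [Sym2.map_pair_eq, Sym2.mk_isDiag_iff] at hd
      exact hM₀.1 _ he₀ (by rw [Sym2.mk_isDiag_iff]; exact psi_inj hd)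
    · exact hEd e he
  · have Hwin : ∀ v : Fin (n+4), i ≤ (v:ℕ) → (v:ℕ) ≤ i+3 →
        ∃! e, e ∈ M₀.image (Sym2.map (psi n i)) ∪ E ∧ v ∈ e := by
      intro v h1 h2
      obtain ⟨e, ⟨heE, hve⟩, hu⟩ := hEm v h1 h2
      refine ⟨e, ⟨Finset.mem_union_right _ heE, hve⟩, ?_⟩
      rintro f ⟨hf, hvf⟩
      rcases Finset.mem_union.1 hf with hf | hf
      · have := img_outside hf v hvf; omega
      · exact hu f ⟨hf, hvf⟩
    have Hout : ∀ v : Fin (n+4), ((v:ℕ) < i ∨ i+4 ≤ (v:ℕ)) →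
        ∃! e, e ∈ M₀.image (Sym2.map (psi n i)) ∪ E ∧ v ∈ e := by
      intro v hv
      obtain ⟨w, rfl⟩ := psi_surj hi v hv
      obtain ⟨e₀, ⟨he₀, hwe₀⟩, hu₀⟩ := hM₀.2.1 w
      refine ⟨Sym2.map (psi n i) e₀,
        ⟨Finset.mem_union_left _ (Finset.mem_image_of_mem _ he₀),
         Sym2.mem_map.2 ⟨w, hwe₀, rfl⟩⟩, ?_⟩
      rintro f ⟨hf, hvf⟩
      rcases Finset.mem_union.1 hf with hf | hf
      · obtain ⟨f₀, hf₀, rfl⟩ := Finset.mem_image.1 hf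
        obtain ⟨u, huf₀, hu2⟩ := Sym2.mem_map.1 hvf
        have huw : u = w := psi_inj hu2
        subst huw
        rw [hu₀ f₀ ⟨hf₀, huf₀⟩]
      · exfalso
        have h1 := hEw f hf _ hvf
        have h2 := psi_out (i := i) w
        omega
    intro v
    rcases Nat.lt_or_ge (v:ℕ) i with hv | hv
    · exact Hout v (Or.inl hv)
    rcases Nat.lt_or_ge (v:ℕ) (i+4) with hv2 | hv2
    · exact Hwin v hv (by omega)
    · exact Hout v (Or.inr hv2)
  · intro e he f hf
    rcases Finset.mem_union.1 he with he | he <;> rcases Finset.mem_union.1 hf with hf | hf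
    · obtain ⟨e₀, he₀, rfl⟩ := Finset.mem_image.1 he
      obtain ⟨f₀, hf₀, rfl⟩ := Finset.mem_image.1 hf
      rw [cross_map_iff _ psi_strictMono]
      exact hM₀.2.2 e₀ he₀ f₀ hf₀
    · exact (cross_window (img_outside he) (hEw f hf)).1
    · exact (cross_window (img_outside hf) (hEw e he)).2
    · exact hEc e he f hf

lemma step_compat {n i : ℕ} (hi : i ≤ n) {M₀ M₀' : Finset (Sym2 (Fin n))}
    (hd : DisjCompat M₀ M₀')
    {E E' : Finset (Sym2 (Fin (n+4)))}
    (hEw : ∀ e ∈ E, ∀ v ∈ e, i ≤ (v:ℕ) ∧ (v:ℕ) ≤ i+3)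
    (hE'w : ∀ e ∈ E', ∀ v ∈ e, i ≤ (v:ℕ) ∧ (v:ℕ) ≤ i+3)
    (hEE' : ∀ e ∈ E, e ∉ E')
    (hEE'c : ∀ e ∈ E, ∀ f ∈ E', ¬Cross e f ∧ ¬Cross f e) :
    DisjCompat (M₀.image (Sym2.map (psi n i)) ∪ E)
      (M₀'.image (Sym2.map (psi n i)) ∪ E') := by
  constructor
  · intro e he hmem
    rcases Finset.mem_union.1 he with he | he <;> rcases Finset.mem_union.1 hmem with hm | hm
    · obtain ⟨e₀, he₀, rfl⟩ := Finset.mem_image.1 he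
      obtain ⟨e₁, he₁, heq⟩ := Finset.mem_image.1 hm
      have : e₁ = e₀ := Sym2.map.injective psi_inj heq
      subst this
      exact hd.1 e₁ he₀ he₁
    · obtain ⟨v, hv⟩ := exists_mem_sym2 e
      have h1 := img_outside he v hv
      have h2 := hE'w e hm v hv
      omega
    · obtain ⟨v, hv⟩ := exists_mem_sym2 e
      have h1 := img_outside hm v hv
      have h2 := hEw e he v hv
      omega
    · exact hEE' e he hm
  · intro e he f hf
    rcases Finset.mem_union.1 he with he | he <;> rcases Finset.mem_union.1 hf with hf | hf
    · obtain ⟨e₀, he₀, rfl⟩ := Finset.mem_image.1 he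
      obtain ⟨f₀, hf₀, rfl⟩ := Finset.mem_image.1 hf
      rw [cross_map_iff _ psi_strictMono, cross_map_iff _ psi_strictMono]
      exact hd.2 e₀ he₀ f₀ hf₀
    · exact cross_window (img_outside he) (hE'w f hf)
    · exact ⟨(cross_window (img_outside hf) (hEw e he)).2,
             (cross_window (img_outside hf) (hEw e he)).1⟩
    · exact hEE'c e he f hf

noncomputable def shrunk (n i : ℕ) (M : Finset (Sym2 (Fin (n+4)))) : Finset (Sym2 (Fin n)) :=
  Finset.univ.filter fun e => Sym2.map (psi n i) e ∈ M

lemma decomp {n i : ℕ} (hi : i ≤ n) {M : Finset (Sym2 (Fin (n+4)))} (hM : IsNCMatching M)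
    {E : Finset (Sym2 (Fin (n+4)))}
    (hEw : ∀ e ∈ E, ∀ v ∈ e, i ≤ (v:ℕ) ∧ (v:ℕ) ≤ i+3)
    (hEcov : ∀ v : Fin (n+4), i ≤ (v:ℕ) → (v:ℕ) ≤ i+3 → ∃ e ∈ E, v ∈ e)
    (hEM : E ⊆ M) :
    M = ((shrunk n i M).image (Sym2.map (psi n i))) ∪ E ∧ IsNCMatching (shrunk n i M) := by
  have hmem : ∀ e₀ : Sym2 (Fin n), e₀ ∈ shrunk n i M ↔ Sym2.map (psi n i) e₀ ∈ M := by
    intro e₀; simp [shrunk]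
  -- edges meeting the window are in E
  have hwinE : ∀ e ∈ M, ∀ v ∈ e, i ≤ (v:ℕ) → (v:ℕ) ≤ i+3 → e ∈ E := by
    intro e he v hv h1 h2
    obtain ⟨g, hgE, hvg⟩ := hEcov v h1 h2
    have : e = g := (hM.2.1 v).unique ⟨he, hv⟩ ⟨hEM hgE, hvg⟩
    exact this ▸ hgE
  have hout : ∀ e ∈ M, e ∉ E → ∀ v ∈ e, (v:ℕ) < i ∨ i+4 ≤ (v:ℕ) := by
    intro e he heE v hv
    rcases Nat.lt_or_ge (v:ℕ) i with h1 | h1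
    · exact Or.inl h1
    rcases Nat.lt_or_ge (v:ℕ) (i+4) with h2 | h2
    · exact absurd (hwinE e he v hv h1 (by omega)) heE
    · exact Or.inr h2
  constructor
  · apply Finset.Subset.antisymm
    · intro e he
      by_cases heE : e ∈ E
      · exact Finset.mem_union_right _ heE
      · obtain ⟨e₀, rfl⟩ := exists_preimage_edge hi e (hout e he heE)
        exact Finset.mem_union_left _ (Finset.mem_image_of_mem _ ((hmem e₀).2 he))
    · intro e he
      rcases Finset.mem_union.1 he with he | he
      · obtain ⟨e₀, he₀, rfl⟩ := Finset.mem_image.1 he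
        exact (hmem e₀).1 he₀
      · exact hEM he
  · refine ⟨?_, ?_, ?_⟩
    · intro e₀ he₀ hd
      exact hM.1 _ ((hmem e₀).1 he₀) (isDiag_map_of hd)
    · intro w
      obtain ⟨e, ⟨heM, hve⟩, hu⟩ := hM.2.1 (psi n i w)
      have heE : e ∉ E := by
        intro heE
        have := hEw e heE _ hve
        have := psi_out (i := i) w
        omega
      obtain ⟨e₀, rfl⟩ := exists_preimage_edge hi e (hout e heM heE)
      obtain ⟨u, hue₀, hu2⟩ := Sym2.mem_map.1 hve
      have huw : u = w := psi_inj hu2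
      subst huw
      refine ⟨e₀, ⟨(hmem e₀).2 heM, hue₀⟩, ?_⟩
      rintro f₀ ⟨hf₀, hwf₀⟩
      have : Sym2.map (psi n i) f₀ = Sym2.map (psi n i) e₀ :=
        hu _ ⟨(hmem f₀).1 hf₀, Sym2.mem_map.2 ⟨u, hwf₀, rfl⟩⟩
      exact Sym2.map.injective psi_inj this
    · intro e₀ he₀ f₀ hf₀ hc
      exact hM.2.2 _ ((hmem e₀).1 he₀) _ ((hmem f₀).1 hf₀)
        ((cross_map_iff _ psi_strictMono _ _).2 hc)
lemma lemB {n : ℕ} (M : Finset (Sym2 (Fin n)))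
    (hnc : ∀ e ∈ M, ∀ f ∈ M, ¬ Cross e f)
    (p : Fin n → Fin n) (hp : ∀ v, s(v, p v) ∈ M)
    (hpu : ∀ v w, s(v, w) ∈ M → w = p v)
    (hpne : ∀ v, p v ≠ v) :
    ∀ d a b : ℕ, b - a = d → ∀ (hb : b < n) (hab : a ≤ b),
      (∀ v : Fin n, a ≤ (v:ℕ) → (v:ℕ) ≤ b → a ≤ ((p v):ℕ) ∧ ((p v):ℕ) ≤ b) →
      (b = a + 1 ∧ s((⟨a, by omega⟩ : Fin n), ⟨b, hb⟩) ∈ M) ∨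
      (∃ i : ℕ, ∃ h3 : i + 3 ≤ b, a ≤ i ∧
        ((s((⟨i, by omega⟩ : Fin n), ⟨i+3, by omega⟩) ∈ M ∧
          s((⟨i+1, by omega⟩ : Fin n), ⟨i+2, by omega⟩) ∈ M) ∨
         (s((⟨i, by omega⟩ : Fin n), ⟨i+1, by omega⟩) ∈ M ∧
          s((⟨i+2, by omega⟩ : Fin n), ⟨i+3, by omega⟩) ∈ M))) := by
  have hinv : ∀ v, p (p v) = v := by
    intro v
    have : s(p v, v) ∈ M := by rw [Sym2.eq_swap]; exact hp v
    exact (hpu (p v) v this).symm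
  intro d
  induction d using Nat.strong_induction_on with
  | _ d IHd =>
  intro a b hd hb hab hsm
  set A : Fin n := ⟨a, by omega⟩ with hA
  have hAval : (A:ℕ) = a := rfl
  obtain ⟨hm1, hm2⟩ := hsm A (by omega) (by omega)
  have hmna : ((p A):ℕ) ≠ a := by
    intro h
    exact hpne A (Fin.ext (by rw [h]))
  rcases (by omega : ((p A):ℕ) = a + 1 ∨ a + 2 ≤ ((p A):ℕ)) with hm | hm
  · -- partner of a is a+1
    by_cases hba : b ≤ a + 1
    · left
      have hbeq : b = a + 1 := by omega
      have : (⟨b, hb⟩ : Fin n) = p A := Fin.ext (by simp; omega)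
      rw [this]
      exact ⟨hbeq, hp A⟩
    · -- recurse on [a+2, b]
      have hsm' : ∀ v : Fin n, a+2 ≤ (v:ℕ) → (v:ℕ) ≤ b → a+2 ≤ ((p v):ℕ) ∧ ((p v):ℕ) ≤ b := by
        intro v h1 h2
        obtain ⟨hw1, hw2⟩ := hsm v (by omega) h2
        have hw3 : ((p v):ℕ) ≠ a := by
          intro h
          have : p v = A := Fin.ext h
          have : v = p A := by rw [← this, hinv]
          have : (v:ℕ) = a + 1 := by rw [this, hm]
          omega
        have hw4 : ((p v):ℕ) ≠ a+1 := by
          intro h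
          have : p v = p A := Fin.ext (by rw [h, hm])
          have : v = A := by
            have := congrArg p this
            rwa [hinv, hinv] at this
          have : (v:ℕ) = a := by rw [this]
          omega
        omega
      rcases IHd (b - (a+2)) (by omega) (a+2) b rfl hb (by omega) hsm' with ⟨hb1, he⟩ | ⟨i, h3, hi, hpat⟩
      · -- antiblock at a
        right
        refine ⟨a, by omega, le_refl a, Or.inr ⟨?_, ?_⟩⟩
        · have : (⟨a+1, by omega⟩ : Fin n) = p A := Fin.ext (by simp; omega)
          rw [this]; exact hp A
        · have h1 : (⟨a+2, by omega⟩ : Fin n) = (⟨a+2, by omega⟩ : Fin n) := rfl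
          have h2 : (⟨a+3, by omega⟩ : Fin n) = (⟨b, hb⟩ : Fin n) := Fin.ext (by simp; omega)
          rw [h2]; exact he
      · right
        exact ⟨i, by omega, by omega, hpat⟩
  · -- partner of a is m ≥ a+2 : recurse on [a+1, m-1]
    set m : ℕ := ((p A):ℕ) with hmdef
    have hsm' : ∀ v : Fin n, a+1 ≤ (v:ℕ) → (v:ℕ) ≤ m-1 → a+1 ≤ ((p v):ℕ) ∧ ((p v):ℕ) ≤ m-1 := by
      intro v h1 h2
      obtain ⟨hw1, hw2⟩ := hsm v (by omega) (by omega)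
      have hw3 : ((p v):ℕ) ≠ a := by
        intro h
        have : p v = A := Fin.ext h
        have : v = p A := by rw [← this, hinv]
        have : (v:ℕ) = m := by rw [this]
        omega
      have hw4 : ((p v):ℕ) ≠ m := by
        intro h
        have : p v = p A := Fin.ext (by rw [h])
        have : v = A := by
          have := congrArg p this
          rwa [hinv, hinv] at this
        have : (v:ℕ) = a := by rw [this]
        omega
      -- if p v > m we get a crossing
      have hw5 : ¬ (m < ((p v):ℕ)) := by
        intro hgt
        have hcross : Cross s(A, p A) s(v, p v) := by
          rw [cross_iff]
          left
          refine ⟨?_, ?_, ?_⟩ <;> rw [Fin.lt_def] <;> omega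
        exact hnc _ (hp A) _ (hp v) hcross
      omega
    rcases IHd ((m-1) - (a+1)) (by omega) (a+1) (m-1) rfl (by omega) (by omega) hsm'
      with ⟨hb1, he⟩ | ⟨i, h3, hi, hpat⟩
    · -- block at a : m = a+3
      right
      have hm3 : m = a + 3 := by omega
      refine ⟨a, by omega, le_refl a, Or.inl ⟨?_, ?_⟩⟩
      · have : (⟨a+3, by omega⟩ : Fin n) = p A := Fin.ext (by simp; omega)
        rw [this]; exact hp A
      · have h2 : (⟨a+2, by omega⟩ : Fin n) = (⟨m-1, by omega⟩ : Fin n) := Fin.ext (by simp; omega)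
        rw [h2]; exact he
    · right
      exact ⟨i, by omega, by omega, hpat⟩
end DisjCompatProof

lemma main_lemma : ∀ n : ℕ, n % 4 = 0 → ∀ M : Finset (Sym2 (Fin n)), IsNCMatching M →
    ∃ M', IsNCMatching M' ∧ DisjCompat M M' := by
  intro n
  induction n using Nat.strong_induction_on with
  | _ n IH =>
  intro h4 M hM
  rcases Nat.eq_zero_or_pos n with rfl | hn
  · refine ⟨∅, ⟨by simp, fun v => v.elim0, by simp⟩, ?_⟩
    exact ⟨fun e _ h => by simp at h, fun e _ f hf => by simp at hf⟩
  obtain ⟨n₀, rfl⟩ : ∃ m, n = m + 4 := ⟨n - 4, by omega⟩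
  have h40 : n₀ % 4 = 0 := by omega
  classical
  -- build the partner function
  choose E hE1 hE2 using fun v => (hM.2.1 v).exists
  set p : Fin (n₀+4) → Fin (n₀+4) := fun v => Sym2.Mem.other' (hE2 v) with hpdef
  have hp : ∀ v, s(v, p v) ∈ M := by
    intro v
    show s(v, Sym2.Mem.other' (hE2 v)) ∈ M
    rw [Sym2.other_spec' (hE2 v)]
    exact hE1 v
  have hpu : ∀ v w, s(v, w) ∈ M → w = p v := by
    intro v w hvw
    have h1 : s(v, w) = E v :=
      (hM.2.1 v).unique ⟨hvw, Sym2.mem_mk_left _ _⟩ ⟨hE1 v, hE2 v⟩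
    rw [← Sym2.other_spec' (hE2 v), Sym2.eq_iff] at h1
    rcases h1 with ⟨-, h⟩ | ⟨h1', h2'⟩
    · exact h
    · rw [h2']; exact h1'
  have hpne : ∀ v, p v ≠ v := by
    intro v h
    refine hM.1 _ (hE1 v) ?_
    rw [← Sym2.other_spec' (hE2 v)]
    show Sym2.IsDiag s(v, p v)
    rw [h]
    exact Sym2.mk_isDiag_iff.2 rfl
  -- find a block or antiblock
  have key := lemB M hM.2.2 p hp hpu hpne (n₀+3) 0 (n₀+3) rfl (by omega) (by omega)
    (fun v _ _ => ⟨Nat.zero_le _, by have := v.isLt; omega⟩)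
  rcases key with ⟨habs, -⟩ | ⟨i, h3, -, hpat⟩
  · omega
  have hi : i ≤ n₀ := by omega
  rcases hpat with hblk | hablk
  · -- block in M, use antiblock in M'
    have hEM : bSet n₀ i hi ⊆ M := by
      intro e he
      simp only [bSet, Finset.mem_insert, Finset.mem_singleton] at he
      rcases he with rfl | rfl
      · exact hblk.1
      · exact hblk.2
    obtain ⟨hMeq, hM₀⟩ := decomp hi hM (bSet_w hi)
      (fun v h1 h2 => (bSet_cov hi v h1 h2).exists) hEM
    obtain ⟨M₀', hM₀', hdc⟩ := IH n₀ (by omega) h40 (shrunk n₀ i M) hM₀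
    refine ⟨M₀'.image (Sym2.map (psi n₀ i)) ∪ aSet n₀ i hi, ?_, ?_⟩
    · exact step_nc hi hM₀' (aSet_w hi) (aSet_cov hi) (aSet_diag hi) (aSet_cross hi)
    · rw [hMeq]
      exact step_compat hi hdc (bSet_w hi) (aSet_w hi) (ba_disj hi) (ba_cross hi)
  · -- antiblock in M, use block in M'
    have hEM : aSet n₀ i hi ⊆ M := by
      intro e he
      simp only [aSet, Finset.mem_insert, Finset.mem_singleton] at he
      rcases he with rfl | rfl
      · exact hablk.1
      · exact hablk.2
    obtain ⟨hMeq, hM₀⟩ := decomp hi hM (aSet_w hi)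
      (fun v h1 h2 => (aSet_cov hi v h1 h2).exists) hEM
    obtain ⟨M₀', hM₀', hdc⟩ := IH n₀ (by omega) h40 (shrunk n₀ i M) hM₀
    refine ⟨M₀'.image (Sym2.map (psi n₀ i)) ∪ bSet n₀ i hi, ?_, ?_⟩
    · exact step_nc hi hM₀' (bSet_w hi) (bSet_cov hi) (bSet_diag hi) (bSet_cross hi)
    · rw [hMeq]
      refine step_compat hi hdc (aSet_w hi) (bSet_w hi) ?_ ?_
      · intro e he hf
        exact ba_disj hi e hf he
      · intro e he f hf
        exact ⟨(ba_cross hi f hf e he).2, (ba_cross hi f hf e he).1⟩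

/-- Every non-crossing perfect matching of even size `k ≥ 1` has at least one
disjoint compatible non-crossing perfect matching. -/
theorem exists_disjCompat_of_even (k : ℕ) (hk : 1 ≤ k) (hke : Even k)
    (M : Finset (Sym2 (Fin (2 * k)))) (hM : IsNCMatching M) :
    ∃ M' : Finset (Sym2 (Fin (2 * k))), IsNCMatching M' ∧ DisjCompat M M' := by
  have h4 : (2 * k) % 4 = 0 := by
    obtain ⟨m, rfl⟩ := hke
    omega
  exact main_lemma (2 * k) h4 M hM
end

section
/- If N is obtained from a non-crossing perfect matching M of size k by inserting a block (two new adjacent points matched to each other nested inside an edge joining two further new adjacent points, inserted into a gap of the cyclic order), then the number of matchings disjoint compatible to N (of size k+2) equals the number of matchings disjoint compatible to M (of size k). -/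
section Helpers

lemma cross_iff_s7 {n : ℕ} (a b c d : Fin n) :
    Cross s(a,b) s(c,d) ↔
      ((a<c ∧ c<b ∧ b<d) ∨ (a<d ∧ d<b ∧ b<c) ∨ (b<c ∧ c<a ∧ a<d) ∨ (b<d ∧ d<a ∧ a<c)) := by
  constructor
  · rintro ⟨p,q,r,s,he,hf,h1,h2,h3⟩
    rw [Sym2.eq_iff] at he hf
    rcases he with ⟨rfl,rfl⟩|⟨rfl,rfl⟩ <;> rcases hf with ⟨rfl,rfl⟩|⟨rfl,rfl⟩ <;> tauto
  · rintro (⟨h1,h2,h3⟩|⟨h1,h2,h3⟩|⟨h1,h2,h3⟩|⟨h1,h2,h3⟩)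
    · exact ⟨a,b,c,d,rfl,rfl,h1,h2,h3⟩
    · exact ⟨a,b,d,c,rfl,Sym2.eq_swap.symm,h1,h2,h3⟩
    · exact ⟨b,a,c,d,Sym2.eq_swap.symm,rfl,h1,h2,h3⟩
    · exact ⟨b,a,d,c,Sym2.eq_swap.symm,Sym2.eq_swap.symm,h1,h2,h3⟩

lemma cross_map_iff_s7 {m k : ℕ} {g : Fin m → Fin k} (hg : StrictMono g)
    (e f : Sym2 (Fin m)) : Cross (e.map g) (f.map g) ↔ Cross e f := by
  induction e using Sym2.ind with | _ a b =>
  induction f using Sym2.ind with | _ c d =>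
  rw [Sym2.map_pair_eq, Sym2.map_pair_eq, cross_iff_s7, cross_iff_s7]
  simp [hg.lt_iff_lt]

/-- An edge between two consecutive points crosses nothing. -/
lemma not_cross_adj {m : ℕ} {a b : Fin m} (h : (b:ℕ) = (a:ℕ)+1) (e : Sym2 (Fin m)) :
    ¬ Cross s(a,b) e ∧ ¬ Cross e s(a,b) := by
  induction e using Sym2.ind with | _ c d =>
  rw [cross_iff_s7, cross_iff_s7]
  simp only [Fin.lt_def]
  omega

end Helpers

def fmap (n : ℕ) (t : Fin (n+1)) : Fin n → Fin (n+4) := fun i : Fin n =>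
  if (i : ℕ) < (t : ℕ) then (⟨(i : ℕ), by have := i.isLt; omega⟩ : Fin (n+4))
  else ⟨(i : ℕ) + 4, by have := i.isLt; omega⟩

def pA (n : ℕ) (t : Fin (n+1)) (j : Fin 4) : Fin (n+4) :=
  ⟨(t:ℕ) + (j:ℕ), by have := t.isLt; have := j.isLt; omega⟩

/-- "Outside the inserted block". -/
def OutP {n : ℕ} (t : Fin (n+1)) (v : Fin (n+4)) : Prop :=
  (v:ℕ) < (t:ℕ) ∨ (t:ℕ)+4 ≤ (v:ℕ)

section Fmap

variable {n : ℕ} (t : Fin (n+1))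

lemma pA0 : (pA n t 0 : ℕ) = t := rfl
lemma pA1 : (pA n t 1 : ℕ) = (t:ℕ)+1 := rfl
lemma pA2 : (pA n t 2 : ℕ) = (t:ℕ)+2 := rfl
lemma pA3 : (pA n t 3 : ℕ) = (t:ℕ)+3 := rfl

lemma fmap_val (i : Fin n) :
    ((fmap n t i : Fin (n+4)) : ℕ) = if (i:ℕ) < (t:ℕ) then (i:ℕ) else (i:ℕ)+4 := by
  unfold fmap; split <;> rfl

lemma fmap_strictMono : StrictMono (fmap n t) := by
  intro i j h
  rw [Fin.lt_def, fmap_val, fmap_val]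
  rw [Fin.lt_def] at h
  split <;> split <;> omega

lemma fmap_injective : Function.Injective (fmap n t) := (fmap_strictMono t).injective

lemma fmap_out (i : Fin n) : OutP t (fmap n t i) := by
  unfold OutP; rw [fmap_val]; split <;> omega

lemma fmap_surj_on (j : Fin (n+4)) (h : OutP t j) : ∃ i, fmap n t i = j := by
  rcases h with h | h
  · exact ⟨⟨(j:ℕ), by have := t.isLt; omega⟩, by apply Fin.ext; rw [fmap_val]; simp [h]⟩
  · refine ⟨⟨(j:ℕ)-4, by have := j.isLt; omega⟩, ?_⟩
    apply Fin.ext; rw [fmap_val]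
    have := j.isLt
    dsimp only
    split <;> omega

lemma pA_not_out (j : Fin 4) : ¬ OutP t (pA n t j) := by
  unfold OutP pA
  have := j.isLt
  dsimp only
  omega

/-- Crossing with a chord inside the block region is impossible for outside edges. -/
lemma not_cross_mid {x y c d : Fin (n+4)} (hx : OutP t x) (hy : OutP t y)
    (hc1 : (t:ℕ) ≤ c) (hc2 : (c:ℕ) ≤ (t:ℕ)+3) (hd1 : (t:ℕ) ≤ d) (hd2 : (d:ℕ) ≤ (t:ℕ)+3) :
    ¬ Cross s(x,y) s(c,d) ∧ ¬ Cross s(c,d) s(x,y) := by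
  unfold OutP at hx hy
  rw [cross_iff_s7, cross_iff_s7]
  simp only [Fin.lt_def]
  omega

end Fmap



def insertAnti (n : ℕ) (t : Fin (n+1)) (M' : Finset (Sym2 (Fin n))) :
    Finset (Sym2 (Fin (n+4))) :=
  M'.image (Sym2.map (fmap n t)) ∪ {s(pA n t 0, pA n t 1), s(pA n t 2, pA n t 3)}

section Main

variable {n : ℕ} (t : Fin (n+1))

lemma pA_val (j : Fin 4) : (pA n t j : ℕ) = (t:ℕ) + (j:ℕ) := rfl

lemma insertBlock_eq (M : Finset (Sym2 (Fin n))) :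
    insertBlock M t = M.image (Sym2.map (fmap n t)) ∪
      {s(pA n t 0, pA n t 3), s(pA n t 1, pA n t 2)} := rfl

lemma mem_insertAnti {M' : Finset (Sym2 (Fin n))} {e : Sym2 (Fin (n+4))} :
    e ∈ insertAnti n t M' ↔
      (∃ e' ∈ M', Sym2.map (fmap n t) e' = e) ∨
        e = s(pA n t 0, pA n t 1) ∨ e = s(pA n t 2, pA n t 3) := by
  simp only [insertAnti, Finset.mem_union, Finset.mem_image, Finset.mem_insert,
    Finset.mem_singleton]

lemma mem_insertBlock {M : Finset (Sym2 (Fin n))} {e : Sym2 (Fin (n+4))} :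
    e ∈ insertBlock M t ↔
      (∃ e' ∈ M, Sym2.map (fmap n t) e' = e) ∨
        e = s(pA n t 0, pA n t 3) ∨ e = s(pA n t 1, pA n t 2) := by
  rw [insertBlock_eq]
  simp only [Finset.mem_union, Finset.mem_image, Finset.mem_insert, Finset.mem_singleton]

lemma image_out {M' : Finset (Sym2 (Fin n))} {e : Sym2 (Fin (n+4))}
    (he : ∃ e' ∈ M', Sym2.map (fmap n t) e' = e) : ∀ v ∈ e, OutP t v := by
  obtain ⟨e', -, rfl⟩ := he
  intro v hv
  rw [Sym2.mem_map] at hv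
  obtain ⟨u, -, rfl⟩ := hv
  exact fmap_out t u

lemma exists_preimage {e : Sym2 (Fin (n+4))} (h : ∀ v ∈ e, OutP t v) :
    ∃ e', Sym2.map (fmap n t) e' = e := by
  induction e using Sym2.ind with | _ x y =>
  obtain ⟨i, hi⟩ := fmap_surj_on t x (h x (Sym2.mem_mk_left x y))
  obtain ⟨j, hj⟩ := fmap_surj_on t y (h y (Sym2.mem_mk_right x y))
  exact ⟨s(i,j), by rw [Sym2.map_pair_eq, hi, hj]⟩

lemma map_mem_insertAnti_iff {M' : Finset (Sym2 (Fin n))} (e' : Sym2 (Fin n)) :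
    Sym2.map (fmap n t) e' ∈ insertAnti n t M' ↔ e' ∈ M' := by
  rw [mem_insertAnti]
  constructor
  · rintro (⟨e'', he'', heq⟩ | heq | heq)
    · rwa [← Sym2.map.injective (fmap_injective t) heq]
    · exfalso
      have hm : pA n t 0 ∈ Sym2.map (fmap n t) e' := by
        rw [heq, Sym2.mem_iff]; tauto
      rw [Sym2.mem_map] at hm
      obtain ⟨u, -, hu⟩ := hm
      exact pA_not_out t 0 (hu ▸ fmap_out t u)
    · exfalso
      have hm : pA n t 2 ∈ Sym2.map (fmap n t) e' := by
        rw [heq, Sym2.mem_iff]; tauto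
      rw [Sym2.mem_map] at hm
      obtain ⟨u, -, hu⟩ := hm
      exact pA_not_out t 2 (hu ▸ fmap_out t u)
  · intro h; exact Or.inl ⟨e', h, rfl⟩

lemma forward_NC {M' : Finset (Sym2 (Fin n))} (h : IsNCMatching M') :
    IsNCMatching (insertAnti n t M') := by
  obtain ⟨hd, hex, hnc⟩ := h
  have adj01 : ((pA n t 1 : ℕ)) = (pA n t 0 : ℕ) + 1 := by rw [pA1, pA0]
  have adj23 : ((pA n t 3 : ℕ)) = (pA n t 2 : ℕ) + 1 := by rw [pA3, pA2]
  refine ⟨?_, ?_, ?_⟩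
  · intro e he
    rw [mem_insertAnti] at he
    rcases he with ⟨e', he', rfl⟩ | rfl | rfl
    · rw [Sym2.isDiag_map (fmap_injective t)]
      exact hd _ he'
    · rw [Sym2.mk_isDiag_iff]
      intro hh; have := congrArg Fin.val hh; rw [pA0, pA1] at this; omega
    · rw [Sym2.mk_isDiag_iff]
      intro hh; have := congrArg Fin.val hh; rw [pA2, pA3] at this; omega
  · intro v
    by_cases hv : OutP t v
    · obtain ⟨i, rfl⟩ := fmap_surj_on t v hv
      obtain ⟨e', ⟨he', hie'⟩, hu⟩ := hex i
      refine ⟨Sym2.map (fmap n t) e', ⟨?_, ?_⟩, ?_⟩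
      · rw [mem_insertAnti]; exact Or.inl ⟨e', he', rfl⟩
      · rw [Sym2.mem_map]; exact ⟨i, hie', rfl⟩
      · rintro e ⟨he, hve⟩
        rw [mem_insertAnti] at he
        rcases he with ⟨e'', he'', rfl⟩ | rfl | rfl
        · rw [Sym2.mem_map] at hve
          obtain ⟨u, hu', hequ⟩ := hve
          have : u = i := fmap_injective t hequ
          subst this
          rw [hu e'' ⟨he'', hu'⟩]
        · exfalso
          rw [Sym2.mem_iff] at hve
          rcases hve with h | h
          · exact pA_not_out t 0 (h ▸ fmap_out t i)
          · exact pA_not_out t 1 (h ▸ fmap_out t i)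
        · exfalso
          rw [Sym2.mem_iff] at hve
          rcases hve with h | h
          · exact pA_not_out t 2 (h ▸ fmap_out t i)
          · exact pA_not_out t 3 (h ▸ fmap_out t i)
    · have hv' : (t:ℕ) ≤ (v:ℕ) ∧ (v:ℕ) < (t:ℕ)+4 := by unfold OutP at hv; omega
      have key : ∀ e, e ∈ insertAnti n t M' → v ∈ e →
          (e = s(pA n t 0, pA n t 1) ∨ e = s(pA n t 2, pA n t 3)) := by
        intro e he hve
        rw [mem_insertAnti] at he
        rcases he with him | h | h
        · exact absurd (image_out t him v hve) hv
        · exact Or.inl h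
        · exact Or.inr h
      by_cases h2 : (v:ℕ) < (t:ℕ)+2
      · have hv0 : v = pA n t 0 ∨ v = pA n t 1 := by
          rcases Nat.lt_or_ge (v:ℕ) ((t:ℕ)+1) with h | h
          · exact Or.inl (Fin.ext (by rw [pA0]; omega))
          · exact Or.inr (Fin.ext (by rw [pA1]; omega))
        refine ⟨s(pA n t 0, pA n t 1), ⟨by rw [mem_insertAnti]; tauto,
          by rw [Sym2.mem_iff]; tauto⟩, ?_⟩
        rintro e ⟨he, hve⟩
        rcases key e he hve with rfl | rfl
        · rfl
        · exfalso
          rw [Sym2.mem_iff] at hve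
          rcases hv0 with rfl | rfl <;> rcases hve with h | h <;>
            (have := congrArg Fin.val h;
             simp only [pA0, pA1, pA2, pA3] at this; omega)
      · have hv0 : v = pA n t 2 ∨ v = pA n t 3 := by
          rcases Nat.lt_or_ge (v:ℕ) ((t:ℕ)+3) with h | h
          · exact Or.inl (Fin.ext (by rw [pA2]; omega))
          · exact Or.inr (Fin.ext (by rw [pA3]; omega))
        refine ⟨s(pA n t 2, pA n t 3), ⟨by rw [mem_insertAnti]; tauto,
          by rw [Sym2.mem_iff]; tauto⟩, ?_⟩
        rintro e ⟨he, hve⟩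
        rcases key e he hve with rfl | rfl
        · exfalso
          rw [Sym2.mem_iff] at hve
          rcases hv0 with rfl | rfl <;> rcases hve with h | h <;>
            (have := congrArg Fin.val h;
             simp only [pA0, pA1, pA2, pA3] at this; omega)
        · rfl
  · intro e he f hf
    rw [mem_insertAnti] at he hf
    rcases he with ⟨e', he', rfl⟩ | rfl | rfl
    · rcases hf with ⟨f', hf', rfl⟩ | rfl | rfl
      · rw [cross_map_iff_s7 (fmap_strictMono t)]
        exact hnc _ he' _ hf'
      · exact (not_cross_adj adj01 _).2
      · exact (not_cross_adj adj23 _).2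
    · exact (not_cross_adj adj01 f).1
    · exact (not_cross_adj adj23 f).1


lemma pA_mem_map_false {e' : Sym2 (Fin n)} {j : Fin 4}
    (h : pA n t j ∈ Sym2.map (fmap n t) e') : False := by
  rw [Sym2.mem_map] at h
  obtain ⟨u, -, hu⟩ := h
  exact pA_not_out t j (hu ▸ fmap_out t u)

lemma forward_DC {M M' : Finset (Sym2 (Fin n))} (hDC : DisjCompat M M') :
    DisjCompat (insertBlock M t) (insertAnti n t M') := by
  obtain ⟨h1, h2⟩ := hDC
  have adj01 : ((pA n t 1 : ℕ)) = (pA n t 0 : ℕ) + 1 := by rw [pA1, pA0]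
  have adj12 : ((pA n t 2 : ℕ)) = (pA n t 1 : ℕ) + 1 := by rw [pA2, pA1]
  have adj23 : ((pA n t 3 : ℕ)) = (pA n t 2 : ℕ) + 1 := by rw [pA3, pA2]
  constructor
  · intro e he hmem
    rw [mem_insertBlock] at he
    rw [mem_insertAnti] at hmem
    rcases he with ⟨e', he', rfl⟩ | rfl | rfl
    · rcases hmem with ⟨f', hf', heq⟩ | heq | heq
      · exact h1 e' he' (Sym2.map.injective (fmap_injective t) heq ▸ hf')
      · exact pA_mem_map_false t (j := 0) (by rw [heq, Sym2.mem_iff]; tauto)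
      · exact pA_mem_map_false t (j := 2) (by rw [heq, Sym2.mem_iff]; tauto)
    · rcases hmem with ⟨f', hf', heq⟩ | heq | heq
      · exact pA_mem_map_false t (j := 0) (by rw [heq, Sym2.mem_iff]; tauto)
      · rw [Sym2.eq_iff] at heq
        rcases heq with ⟨h, h'⟩ | ⟨h, h'⟩ <;>
          (have hv1 := congrArg Fin.val h; have hv2 := congrArg Fin.val h';
           simp only [pA0, pA1, pA2, pA3] at hv1 hv2; omega)
      · rw [Sym2.eq_iff] at heq
        rcases heq with ⟨h, h'⟩ | ⟨h, h'⟩ <;>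
          (have hv1 := congrArg Fin.val h; have hv2 := congrArg Fin.val h';
           simp only [pA0, pA1, pA2, pA3] at hv1 hv2; omega)
    · rcases hmem with ⟨f', hf', heq⟩ | heq | heq
      · exact pA_mem_map_false t (j := 1) (by rw [heq, Sym2.mem_iff]; tauto)
      · rw [Sym2.eq_iff] at heq
        rcases heq with ⟨h, h'⟩ | ⟨h, h'⟩ <;>
          (have hv1 := congrArg Fin.val h; have hv2 := congrArg Fin.val h';
           simp only [pA0, pA1, pA2, pA3] at hv1 hv2; omega)
      · rw [Sym2.eq_iff] at heq
        rcases heq with ⟨h, h'⟩ | ⟨h, h'⟩ <;>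
          (have hv1 := congrArg Fin.val h; have hv2 := congrArg Fin.val h';
           simp only [pA0, pA1, pA2, pA3] at hv1 hv2; omega)
  · intro e he f hf
    rw [mem_insertBlock] at he
    rw [mem_insertAnti] at hf
    rcases he with ⟨e', he', rfl⟩ | rfl | rfl
    · rcases hf with ⟨f', hf', rfl⟩ | rfl | rfl
      · rw [cross_map_iff_s7 (fmap_strictMono t), cross_map_iff_s7 (fmap_strictMono t)]
        exact h2 e' he' f' hf'
      · exact ⟨(not_cross_adj adj01 _).2, (not_cross_adj adj01 _).1⟩
      · exact ⟨(not_cross_adj adj23 _).2, (not_cross_adj adj23 _).1⟩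
    · rcases hf with ⟨f', hf', rfl⟩ | rfl | rfl
      · induction f' using Sym2.ind with | _ x y =>
        rw [Sym2.map_pair_eq]
        have h03 := not_cross_mid t (fmap_out t x) (fmap_out t y)
          (c := pA n t 0) (d := pA n t 3) (by simp only [pA0]; omega)
          (by simp only [pA0]; omega) (by simp only [pA3]; omega)
          (by simp only [pA3]; omega)
        exact ⟨h03.2, h03.1⟩
      · exact ⟨(not_cross_adj adj01 _).2, (not_cross_adj adj01 _).1⟩
      · exact ⟨(not_cross_adj adj23 _).2, (not_cross_adj adj23 _).1⟩
    · exact ⟨(not_cross_adj adj12 f).1, (not_cross_adj adj12 f).2⟩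

lemma forced {M : Finset (Sym2 (Fin n))} {N' : Finset (Sym2 (Fin (n+4)))}
    (hN : IsNCMatching N') (hD : DisjCompat (insertBlock M t) N') :
    s(pA n t 0, pA n t 1) ∈ N' ∧ s(pA n t 2, pA n t 3) ∈ N' := by
  obtain ⟨hd, hex, hnc⟩ := hN
  obtain ⟨hD1, hD2⟩ := hD
  have hb03 : s(pA n t 0, pA n t 3) ∈ insertBlock M t := by
    rw [mem_insertBlock]; tauto
  have hb12 : s(pA n t 1, pA n t 2) ∈ insertBlock M t := by
    rw [mem_insertBlock]; tauto
  have partner : ∀ j : Fin 4, 1 ≤ (j:ℕ) → (j:ℕ) ≤ 2 →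
      ∃ x : Fin (n+4), s(pA n t j, x) ∈ N' ∧
        (t:ℕ) ≤ (x:ℕ) ∧ (x:ℕ) < (t:ℕ)+4 ∧ (x:ℕ) ≠ (t:ℕ)+(j:ℕ) := by
    intro j hj1 hj2
    obtain ⟨e, ⟨he, hm⟩, -⟩ := hex (pA n t j)
    obtain ⟨x, rfl⟩ := Sym2.mem_iff_exists.mp hm
    refine ⟨x, he, ?_⟩
    have hxne : (x:ℕ) ≠ (t:ℕ)+(j:ℕ) := by
      intro hh
      exact hd _ he (Sym2.mk_isDiag_iff.mpr (Fin.ext (by rw [pA_val]; omega)).symm)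
    have hcr := hD2 _ hb03 _ he
    have hout : ¬ OutP t x := by
      intro hout
      rcases hout with hlt | hge
      · apply hcr.2
        rw [cross_iff_s7]
        right; right; left
        refine ⟨?_, ?_, ?_⟩ <;> (simp only [Fin.lt_def, pA0, pA3, pA_val]; omega)
      · apply hcr.1
        rw [cross_iff_s7]
        left
        refine ⟨?_, ?_, ?_⟩ <;> (simp only [Fin.lt_def, pA0, pA3, pA_val]; omega)
    unfold OutP at hout
    omega
  obtain ⟨x1, he1, hx1⟩ := partner 1 (by decide) (by decide)
  obtain ⟨x2, he2, hx2⟩ := partner 2 (by decide) (by decide)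
  have h1v : ((1:Fin 4):ℕ) = 1 := rfl
  have h2v : ((2:Fin 4):ℕ) = 2 := rfl
  rw [h1v] at hx1
  rw [h2v] at hx2
  have hx1' : x1 = pA n t 0 ∨ x1 = pA n t 2 ∨ x1 = pA n t 3 := by
    have : (x1:ℕ) = (t:ℕ) ∨ (x1:ℕ) = (t:ℕ)+2 ∨ (x1:ℕ) = (t:ℕ)+3 := by omega
    rcases this with h | h | h
    · exact Or.inl (Fin.ext (by rw [pA0]; exact h))
    · exact Or.inr (Or.inl (Fin.ext (by rw [pA2]; exact h)))
    · exact Or.inr (Or.inr (Fin.ext (by rw [pA3]; exact h)))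
  have hx2' : x2 = pA n t 0 ∨ x2 = pA n t 1 ∨ x2 = pA n t 3 := by
    have : (x2:ℕ) = (t:ℕ) ∨ (x2:ℕ) = (t:ℕ)+1 ∨ (x2:ℕ) = (t:ℕ)+3 := by omega
    rcases this with h | h | h
    · exact Or.inl (Fin.ext (by rw [pA0]; exact h))
    · exact Or.inr (Or.inl (Fin.ext (by rw [pA1]; exact h)))
    · exact Or.inr (Or.inr (Fin.ext (by rw [pA3]; exact h)))
  -- x1 = pA2 impossible
  rcases hx1' with rfl | rfl | rfl
  · -- x1 = pA0, the good case for the first edge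
    rcases hx2' with rfl | rfl | rfl
    · -- x2 = pA0: both edges contain pA0, uniqueness gives contradiction
      exfalso
      obtain ⟨e0, -, hu0⟩ := hex (pA n t 0)
      have hq1 := hu0 _ ⟨he1, by rw [Sym2.mem_iff]; tauto⟩
      have hq2 := hu0 _ ⟨he2, by rw [Sym2.mem_iff]; tauto⟩
      have : s(pA n t 1, pA n t 0) = s(pA n t 2, pA n t 0) := hq1.trans hq2.symm
      rw [Sym2.eq_iff] at this
      rcases this with ⟨h, h'⟩ | ⟨h, h'⟩ <;>
        (have hv1 := congrArg Fin.val h; have hv2 := congrArg Fin.val h';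
         simp only [pA0, pA1, pA2] at hv1 hv2; omega)
    · -- x2 = pA1: edge s(pA2,pA1) = s(pA1,pA2) is in the block
      exact absurd (Sym2.eq_swap ▸ he2) (hD1 _ hb12)
    · exact ⟨Sym2.eq_swap ▸ he1, he2⟩
  · -- x1 = pA2: edge s(pA1,pA2) is in the block
    exact absurd he1 (hD1 _ hb12)
  · -- x1 = pA3
    exfalso
    rcases hx2' with rfl | rfl | rfl
    · -- x2 = pA0: crossing s(pA2,pA0) and s(pA1,pA3)
      apply hnc _ he2 _ he1
      rw [cross_iff_s7]
      right; right; left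
      refine ⟨?_, ?_, ?_⟩ <;> (simp only [Fin.lt_def, pA0, pA1, pA2, pA3]; omega)
    · exact absurd (Sym2.eq_swap ▸ he2) (hD1 _ hb12)
    · -- x2 = pA3: both edges contain pA3
      obtain ⟨e0, -, hu0⟩ := hex (pA n t 3)
      have hq1 := hu0 _ ⟨he1, by rw [Sym2.mem_iff]; tauto⟩
      have hq2 := hu0 _ ⟨he2, by rw [Sym2.mem_iff]; tauto⟩
      have : s(pA n t 1, pA n t 3) = s(pA n t 2, pA n t 3) := hq1.trans hq2.symm
      rw [Sym2.eq_iff] at this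
      rcases this with ⟨h, h'⟩ | ⟨h, h'⟩ <;>
        (have hv1 := congrArg Fin.val h; have hv2 := congrArg Fin.val h';
         simp only [pA1, pA2, pA3] at hv1 hv2; omega)

lemma backward {M : Finset (Sym2 (Fin n))} {N' : Finset (Sym2 (Fin (n+4)))}
    (hN : IsNCMatching N') (hD : DisjCompat (insertBlock M t) N') :
    ∃ M' : Finset (Sym2 (Fin n)),
      (IsNCMatching M' ∧ DisjCompat M M') ∧ insertAnti n t M' = N' := by
  obtain ⟨hf1, hf2⟩ := forced t hN hD
  obtain ⟨hd, hex, hnc⟩ := hN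
  obtain ⟨hD1, hD2⟩ := hD
  classical
  set F := Sym2.map (fmap n t) with hF
  refine ⟨Finset.univ.filter (fun e' => F e' ∈ N'), ⟨⟨?_, ?_, ?_⟩, ?_, ?_⟩, ?_⟩
  case _ =>
    -- no diagonal
    intro e' he' hdiag
    rw [Finset.mem_filter] at he'
    exact hd _ he'.2 ((Sym2.isDiag_map (fmap_injective t)).mpr hdiag)
  case _ =>
    -- perfect matching
    intro v
    obtain ⟨e, ⟨heN, hve⟩, hu⟩ := hex (fmap n t v)
    have hvout := fmap_out t v
    have hne1 : e ≠ s(pA n t 0, pA n t 1) := by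
      rintro rfl
      rw [Sym2.mem_iff] at hve
      rcases hve with h | h
      · exact pA_not_out t 0 (h ▸ hvout)
      · exact pA_not_out t 1 (h ▸ hvout)
    have hne2 : e ≠ s(pA n t 2, pA n t 3) := by
      rintro rfl
      rw [Sym2.mem_iff] at hve
      rcases hve with h | h
      · exact pA_not_out t 2 (h ▸ hvout)
      · exact pA_not_out t 3 (h ▸ hvout)
    have hout : ∀ w ∈ e, OutP t w := by
      intro w hw
      by_contra hwout
      have hw' : (t:ℕ) ≤ (w:ℕ) ∧ (w:ℕ) < (t:ℕ)+4 := by unfold OutP at hwout; omega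
      obtain ⟨e0, -, hu0⟩ := hex w
      have hee0 : e = e0 := hu0 e ⟨heN, hw⟩
      by_cases hw2 : (w:ℕ) < (t:ℕ)+2
      · have hwp : w = pA n t 0 ∨ w = pA n t 1 := by
          rcases Nat.lt_or_ge (w:ℕ) ((t:ℕ)+1) with h | h
          · exact Or.inl (Fin.ext (by rw [pA0]; omega))
          · exact Or.inr (Fin.ext (by rw [pA1]; omega))
        have : s(pA n t 0, pA n t 1) = e0 := by
          apply hu0
          refine ⟨hf1, ?_⟩
          rw [Sym2.mem_iff]; tauto
        exact hne1 (hee0.trans this.symm)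
      · have hwp : w = pA n t 2 ∨ w = pA n t 3 := by
          rcases Nat.lt_or_ge (w:ℕ) ((t:ℕ)+3) with h | h
          · exact Or.inl (Fin.ext (by rw [pA2]; omega))
          · exact Or.inr (Fin.ext (by rw [pA3]; omega))
        have : s(pA n t 2, pA n t 3) = e0 := by
          apply hu0
          refine ⟨hf2, ?_⟩
          rw [Sym2.mem_iff]; tauto
        exact hne2 (hee0.trans this.symm)
    obtain ⟨e', rfl⟩ := exists_preimage t hout
    refine ⟨e', ⟨?_, ?_⟩, ?_⟩
    · rw [Finset.mem_filter]; exact ⟨Finset.mem_univ _, heN⟩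
    · rw [Sym2.mem_map] at hve
      obtain ⟨u, hu', hequ⟩ := hve
      rwa [← fmap_injective t hequ]
    · rintro e'' ⟨he'', hve''⟩
      rw [Finset.mem_filter] at he''
      have : F e'' = Sym2.map (fmap n t) e' :=
        hu (F e'') ⟨he''.2, Sym2.mem_map.mpr ⟨v, hve'', rfl⟩⟩
      exact Sym2.map.injective (fmap_injective t) this
  case _ =>
    -- non-crossing
    intro e he f hf
    rw [Finset.mem_filter] at he hf
    rw [← cross_map_iff_s7 (fmap_strictMono t)]
    exact hnc _ he.2 _ hf.2
  case _ =>
    -- no common edge with M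
    intro e he hmem
    rw [Finset.mem_filter] at hmem
    exact hD1 (F e) (by rw [mem_insertBlock]; exact Or.inl ⟨e, he, rfl⟩) hmem.2
  case _ =>
    -- no crossing with M
    intro e he f hf
    rw [Finset.mem_filter] at hf
    have := hD2 (F e) (by rw [mem_insertBlock]; exact Or.inl ⟨e, he, rfl⟩) (F f) hf.2
    rwa [hF, cross_map_iff_s7 (fmap_strictMono t), cross_map_iff_s7 (fmap_strictMono t)] at this
  case _ =>
    -- insertAnti of the filter is N'
    ext e
    rw [mem_insertAnti]
    constructor
    · rintro (⟨e', he', rfl⟩ | rfl | rfl)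
      · rw [Finset.mem_filter] at he'
        exact he'.2
      · exact hf1
      · exact hf2
    · intro he
      by_cases h1 : e = s(pA n t 0, pA n t 1)
      · exact Or.inr (Or.inl h1)
      by_cases h2 : e = s(pA n t 2, pA n t 3)
      · exact Or.inr (Or.inr h2)
      left
      have hout : ∀ v ∈ e, OutP t v := by
        intro v hv
        by_contra hvout
        have hv' : (t:ℕ) ≤ (v:ℕ) ∧ (v:ℕ) < (t:ℕ)+4 := by unfold OutP at hvout; omega
        obtain ⟨e0, -, hu0⟩ := hex v
        have hee0 : e = e0 := hu0 e ⟨he, hv⟩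
        by_cases hv2 : (v:ℕ) < (t:ℕ)+2
        · have hvp : v = pA n t 0 ∨ v = pA n t 1 := by
            rcases Nat.lt_or_ge (v:ℕ) ((t:ℕ)+1) with h | h
            · exact Or.inl (Fin.ext (by rw [pA0]; omega))
            · exact Or.inr (Fin.ext (by rw [pA1]; omega))
          have : s(pA n t 0, pA n t 1) = e0 := by
            apply hu0
            refine ⟨hf1, ?_⟩
            rw [Sym2.mem_iff]; tauto
          exact h1 (hee0.trans this.symm)
        · have hvp : v = pA n t 2 ∨ v = pA n t 3 := by
            rcases Nat.lt_or_ge (v:ℕ) ((t:ℕ)+3) with h | h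
            · exact Or.inl (Fin.ext (by rw [pA2]; omega))
            · exact Or.inr (Fin.ext (by rw [pA3]; omega))
          have : s(pA n t 2, pA n t 3) = e0 := by
            apply hu0
            refine ⟨hf2, ?_⟩
            rw [Sym2.mem_iff]; tauto
          exact h2 (hee0.trans this.symm)
      obtain ⟨e', rfl⟩ := exists_preimage t hout
      exact ⟨e', by rw [Finset.mem_filter]; exact ⟨Finset.mem_univ _, he⟩, rfl⟩

theorem degree_insertBlock_general {n : ℕ} (M : Finset (Sym2 (Fin n))) (t : Fin (n+1)) :
    Nat.card {N' : Finset (Sym2 (Fin (n+4))) //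
        IsNCMatching N' ∧ DisjCompat (insertBlock M t) N'} =
      Nat.card {M' : Finset (Sym2 (Fin n)) // IsNCMatching M' ∧ DisjCompat M M'} := by
  have hbij : Function.Bijective
      (fun p : {M' : Finset (Sym2 (Fin n)) // IsNCMatching M' ∧ DisjCompat M M'} =>
        (⟨insertAnti n t p.1, forward_NC t p.2.1, forward_DC t p.2.2⟩ :
          {N' : Finset (Sym2 (Fin (n+4))) //
            IsNCMatching N' ∧ DisjCompat (insertBlock M t) N'})) := by
    constructor
    · rintro ⟨M1, h1⟩ ⟨M2, h2⟩ h
      have heq : insertAnti n t M1 = insertAnti n t M2 := congrArg Subtype.val h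
      apply Subtype.ext
      ext e'
      constructor
      · intro hm
        rw [← map_mem_insertAnti_iff t e', ← heq, map_mem_insertAnti_iff t e']
        exact hm
      · intro hm
        rw [← map_mem_insertAnti_iff t e', heq, map_mem_insertAnti_iff t e']
        exact hm
    · rintro ⟨N', hN, hD⟩
      obtain ⟨M', hp, heq⟩ := backward t hN hD
      exact ⟨⟨M', hp⟩, Subtype.ext heq⟩
  exact (Nat.card_congr (Equiv.ofBijective _ hbij)).symm

end Main

/-- Inserting a block does not change the number of disjoint compatible matchings. -/
theorem degree_insertBlock (k : ℕ) (M : Finset (Sym2 (Fin (2 * k))))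
    (hM : IsNCMatching M) (t : Fin (2 * k + 1)) :
    Nat.card {M' : Finset (Sym2 (Fin (2 * k + 4))) //
        IsNCMatching M' ∧ DisjCompat (insertBlock M t) M'} =
      Nat.card {M' : Finset (Sym2 (Fin (2 * k))) //
        IsNCMatching M' ∧ DisjCompat M M'} := by
  exact degree_insertBlock_general M t
end

section
/- Every I-matching of size k ≥ 3 contains at least two blocks, and for k ≥ 5 these can be chosen disjoint. -/
/-!
Induction along the construction, keeping track of two blocks whose interior gaps are
disjoint. A block inserted into a gap destroys at most one of them; the other one
survives, relabelled, and forms with the new block a pair of the same kind whose edges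
are even disjoint. On six points the two blocks share their long edge, which is why
disjointness only starts at ten points.
-/

/-- Gap `g` is the one just before point `g`, so `insertBlock M t` fills gap `t % n`. -/
def interiorGaps {n : ℕ} (i : Fin n) : Finset (Fin n) :=
  {cyc i 1, cyc i 2, cyc i 3}

def insertShift {n : ℕ} (t : Fin (n+1)) (i : Fin n) : Fin (n+4) :=
  if (i : ℕ) < (t : ℕ) then ⟨i, by omega⟩ else ⟨i + 4, by omega⟩

section InsertBlock

variable {n : ℕ} (t : Fin (n+1))

lemma insertShift_val (i : Fin n) :
    (insertShift t i : ℕ) = if (i : ℕ) < t then (i : ℕ) else i + 4 := by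
  unfold insertShift
  split_ifs <;> rfl

lemma insertShift_val_lt_or_gt (i : Fin n) :
    (insertShift t i : ℕ) < t ∨ (t : ℕ) + 3 < insertShift t i := by
  rw [insertShift_val]
  split_ifs <;> omega

lemma cyc_castLE_val {k : ℕ} (hk : k ≤ 3) :
    (cyc (t.castLE (by omega) : Fin (n+4)) k : ℕ) = t + k :=
  Nat.mod_eq_of_lt (by simp; omega)

lemma mem_insertBlock_of_mem {M : Finset (Sym2 (Fin n))} {e : Sym2 (Fin n)} (he : e ∈ M) :
    e.map (insertShift t) ∈ insertBlock M t :=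
  Finset.mem_union_left _ (Finset.mem_image_of_mem _ he)

lemma isBlock_insertBlock_castLE (M : Finset (Sym2 (Fin n))) :
    IsBlock (insertBlock M t) (t.castLE (by omega)) := by
  have hcyc : ∀ k, (hk : k ≤ 3) →
      cyc (t.castLE (by omega) : Fin (n+4)) k = ⟨t + k, by omega⟩ :=
    fun k hk => Fin.ext (cyc_castLE_val t hk)
  rw [IsBlock, blockEdges, hcyc 1 (by norm_num), hcyc 2 (by norm_num), hcyc 3 (by norm_num)]
  exact Finset.subset_union_right

private lemma mod_eq_of_lt_two_mul {x m : ℕ} (h : x < 2 * m) :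
    x % m = x ∧ x < m ∨ x % m = x - m ∧ m ≤ x := by
  rcases Nat.lt_or_ge x m with hx | hx
  · exact Or.inl ⟨Nat.mod_eq_of_lt hx, hx⟩
  · exact Or.inr ⟨by rw [Nat.mod_eq_sub_mod hx, Nat.mod_eq_of_lt (by omega)], hx⟩

lemma cyc_insertShift {i : Fin n} (ht : ∀ g ∈ interiorGaps i, (g : ℕ) ≠ t % n)
    {k : ℕ} (hk : k ≤ 3) : cyc (insertShift t i) k = insertShift t (cyc i k) := by
  simp only [interiorGaps, Finset.mem_insert, Finset.mem_singleton, forall_eq_or_imp,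
    forall_eq, cyc] at ht
  obtain ⟨h1, h2, h3⟩ := ht
  have hi := i.isLt
  have htn := t.isLt
  rcases Nat.lt_or_ge n 4 with hn | hn
  · interval_cases n <;> omega
  apply Fin.ext
  simp only [cyc, insertShift_val]
  have m1 := mod_eq_of_lt_two_mul (x := i + 1) (m := n) (by omega)
  have m2 := mod_eq_of_lt_two_mul (x := i + 2) (m := n) (by omega)
  have m3 := mod_eq_of_lt_two_mul (x := i + 3) (m := n) (by omega)
  have mk := mod_eq_of_lt_two_mul (x := i + k) (m := n) (by omega)
  have mt := mod_eq_of_lt_two_mul (x := t) (m := n) (by omega)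
  have q := mod_eq_of_lt_two_mul (x := i + k) (m := n + 4) (by omega)
  have q' := mod_eq_of_lt_two_mul (x := i + 4 + k) (m := n + 4) (by omega)
  split_ifs <;> omega

variable {t} {i : Fin n}

lemma IsBlock.insertBlock_insertShift {M : Finset (Sym2 (Fin n))} (hi : IsBlock M i)
    (ht : ∀ g ∈ interiorGaps i, (g : ℕ) ≠ t % n) :
    IsBlock (insertBlock M t) (insertShift t i) := by
  intro e he
  simp only [blockEdges, cyc_insertShift t ht (by norm_num : 3 ≤ 3),
    cyc_insertShift t ht (by norm_num : 1 ≤ 3), cyc_insertShift t ht (by norm_num : 2 ≤ 3),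
    ← Sym2.map_mk, Finset.mem_insert, Finset.mem_singleton] at he
  rcases he with rfl | rfl <;> exact mem_insertBlock_of_mem t (hi (by simp [blockEdges]))

lemma cyc_insertShift_val_lt_or_gt (ht : ∀ g ∈ interiorGaps i, (g : ℕ) ≠ t % n) {k : ℕ}
    (hk : k ≤ 3) :
    (cyc (insertShift t i) k : ℕ) < t ∨ (t : ℕ) + 3 < cyc (insertShift t i) k := by
  rw [cyc_insertShift t ht hk]
  exact insertShift_val_lt_or_gt t _

lemma disjoint_blockEdges_insertShift_castLE (ht : ∀ g ∈ interiorGaps i, (g : ℕ) ≠ t % n) :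
    Disjoint (blockEdges (insertShift t i)) (blockEdges (t.castLE (by omega))) := by
  have := insertShift_val_lt_or_gt t i
  have := cyc_insertShift_val_lt_or_gt ht (by norm_num : 1 ≤ 3)
  have := cyc_insertShift_val_lt_or_gt ht (by norm_num : 2 ≤ 3)
  have := cyc_insertShift_val_lt_or_gt ht (by norm_num : 3 ≤ 3)
  have := cyc_castLE_val t (by norm_num : 1 ≤ 3)
  have := cyc_castLE_val t (by norm_num : 2 ≤ 3)
  have := cyc_castLE_val t (by norm_num : 3 ≤ 3)
  rw [Finset.disjoint_left]
  intro e he he'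
  simp only [blockEdges, Finset.mem_insert, Finset.mem_singleton] at he he'
  rcases he with rfl | rfl <;> rcases he' with h | h <;>
    simp only [Sym2.eq_iff, Fin.ext_iff, Fin.val_castLE] at h <;> omega

lemma disjoint_interiorGaps_insertShift_castLE
    (ht : ∀ g ∈ interiorGaps i, (g : ℕ) ≠ t % n) :
    Disjoint (interiorGaps (insertShift t i)) (interiorGaps (t.castLE (by omega))) := by
  have := cyc_insertShift_val_lt_or_gt ht (by norm_num : 1 ≤ 3)
  have := cyc_insertShift_val_lt_or_gt ht (by norm_num : 2 ≤ 3)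
  have := cyc_insertShift_val_lt_or_gt ht (by norm_num : 3 ≤ 3)
  have := cyc_castLE_val t (by norm_num : 1 ≤ 3)
  have := cyc_castLE_val t (by norm_num : 2 ≤ 3)
  have := cyc_castLE_val t (by norm_num : 3 ≤ 3)
  rw [Finset.disjoint_left]
  intro g hg hg'
  simp only [interiorGaps, Finset.mem_insert, Finset.mem_singleton] at hg hg'
  rcases hg with rfl | rfl | rfl <;> rcases hg' with h | h | h <;>
    rw [Fin.ext_iff] at h <;> omega

end InsertBlock

lemma IsIMatching.mod_four {n : ℕ} {M : Finset (Sym2 (Fin n))} (hM : IsIMatching n M) :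
    n % 4 = 2 := by
  induction hM with
  | base => rfl
  | step _ _ _ ih => omega

lemma IsIMatching.eq_of_two {M : Finset (Sym2 (Fin 2))} (hM : IsIMatching 2 M) :
    M = {s(0, 1)} := by
  cases hM
  rfl

lemma exists_blocks_insertBlock {n : ℕ} {M : Finset (Sym2 (Fin n))} {i : Fin n}
    (hi : IsBlock M i) (t : Fin (n+1)) (ht : ∀ g ∈ interiorGaps i, (g : ℕ) ≠ t % n) :
    ∃ i' j' : Fin (n+4), IsBlock (insertBlock M t) i' ∧ IsBlock (insertBlock M t) j' ∧
      Disjoint (blockEdges i') (blockEdges j') ∧ Disjoint (interiorGaps i') (interiorGaps j') :=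
  ⟨_, _, hi.insertBlock_insertShift ht, isBlock_insertBlock_castLE t M,
    disjoint_blockEdges_insertShift_castLE ht, disjoint_interiorGaps_insertShift_castLE ht⟩

lemma IsIMatching.exists_blocks {n : ℕ} {M : Finset (Sym2 (Fin n))} (hM : IsIMatching n M)
    (hn : 6 ≤ n) :
    ∃ i j : Fin n, IsBlock M i ∧ IsBlock M j ∧ blockEdges i ≠ blockEdges j ∧
      Disjoint (interiorGaps i) (interiorGaps j) ∧
      (10 ≤ n → Disjoint (blockEdges i) (blockEdges j)) := by
  induction hM with
  | base => omega
  | @step n M t hM ih =>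
    rcases (by have := hM.mod_four; omega : n = 2 ∨ 6 ≤ n) with rfl | hn
    · rw [hM.eq_of_two]
      unfold IsBlock
      fin_cases t <;> decide
    obtain ⟨i, j, hi, hj, -, hgaps, -⟩ := ih hn
    have ht : (∀ g ∈ interiorGaps i, (g : ℕ) ≠ t % n) ∨
        ∀ g ∈ interiorGaps j, (g : ℕ) ≠ t % n := by
      by_contra! ⟨⟨g, hg, hgt⟩, ⟨g', hg', hg't⟩⟩
      exact Finset.disjoint_left.mp hgaps hg (Fin.ext (hgt.trans hg't.symm) ▸ hg')
    obtain ⟨i', j', hi', hj', hedges, hgaps'⟩ :=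
      ht.elim (exists_blocks_insertBlock hi t) (exists_blocks_insertBlock hj t)
    refine ⟨i', j', hi', hj', fun h => ?_, hgaps', fun _ => hedges⟩
    rw [h, Finset.disjoint_self_iff_empty, blockEdges] at hedges
    exact Finset.insert_ne_empty _ _ hedges

/-- Every I-matching of size `k ≥ 3` (i.e. on `n = 2k ≥ 6` points) contains at
least two blocks, which for `k ≥ 5` can be chosen disjoint. -/
theorem IMatching_two_blocks (n : ℕ) (M : Finset (Sym2 (Fin n)))
    (hM : IsIMatching n M) :
    (6 ≤ n → ∃ i j : Fin n, IsBlock M i ∧ IsBlock M j ∧ blockEdges i ≠ blockEdges j) ∧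
    (10 ≤ n → ∃ i j : Fin n, IsBlock M i ∧ IsBlock M j ∧
      Disjoint (blockEdges i) (blockEdges j)) := by
  refine ⟨fun hn => ?_, fun hn => ?_⟩
  · obtain ⟨i, j, hi, hj, hne, -⟩ := hM.exists_blocks hn
    exact ⟨i, j, hi, hj, hne⟩
  · obtain ⟨i, j, hi, hj, -, -, hdisj⟩ := hM.exists_blocks (by omega)
    exact ⟨i, j, hi, hj, hdisj hn⟩
end

section
/- In an I-matching of odd size k = 2ℓ−1, color an edge red if the two arcs of remaining points it separates each contain an even number of matched points (equivalently the two submatchings it separates have even sizes) and black otherwise; then the number of red edges is ℓ and the number of black edges is ℓ−1. -/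
/-- Number of edges of `M` lying strictly inside the chord `ab`. -/
noncomputable def insideCount {n : ℕ} (M : Finset (Sym2 (Fin n))) (a b : Fin n) : ℕ :=
  Nat.card {e : Sym2 (Fin n) // e ∈ M ∧ ∀ v ∈ e, a < v ∧ v < b}

/-- Number of edges of `M` lying strictly outside the chord `ab`. -/
noncomputable def outsideCount {n : ℕ} (M : Finset (Sym2 (Fin n))) (a b : Fin n) : ℕ :=
  Nat.card {e : Sym2 (Fin n) // e ∈ M ∧ ∀ v ∈ e, v < a ∨ b < v}

/-- The edge `e = s(a,b)` is red: both submatchings it separates have even size. -/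
def RedEdge {n : ℕ} (M : Finset (Sym2 (Fin n))) (e : Sym2 (Fin n)) : Prop :=
  ∃ a b : Fin n, e = s(a, b) ∧ a < b ∧
    Even (insideCount M a b) ∧ Even (outsideCount M a b)

/-- The edge `e = s(a,b)` is black: both submatchings it separates have odd size. -/
def BlackEdge {n : ℕ} (M : Finset (Sym2 (Fin n))) (e : Sym2 (Fin n)) : Prop :=
  ∃ a b : Fin n, e = s(a, b) ∧ a < b ∧
    Odd (insideCount M a b) ∧ Odd (outsideCount M a b)


open Finset

attribute [local instance] Classical.propDecidable

namespace IMRB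

def phi {n : ℕ} (t : Fin (n+1)) (i : Fin n) : Fin (n+4) :=
  if (i : ℕ) < (t : ℕ) then (⟨(i : ℕ), by have := i.isLt; omega⟩ : Fin (n+4))
  else ⟨(i : ℕ) + 4, by have := i.isLt; omega⟩

lemma phi_val {n : ℕ} (t : Fin (n+1)) (i : Fin n) :
    ((phi t i : Fin (n+4)) : ℕ) = if (i : ℕ) < (t : ℕ) then (i : ℕ) else (i : ℕ) + 4 := by
  unfold phi; split <;> rfl

lemma phi_strictMono {n : ℕ} (t : Fin (n+1)) : StrictMono (phi t) := by
  intro i j hij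
  have h : (i : ℕ) < (j : ℕ) := hij
  rw [Fin.lt_def, phi_val, phi_val]
  split <;> split <;> omega

lemma phi_lt_iff {n : ℕ} (t : Fin (n+1)) {i j : Fin n} : phi t i < phi t j ↔ i < j :=
  (phi_strictMono t).lt_iff_lt

def e1 {n : ℕ} (t : Fin (n+1)) : Sym2 (Fin (n+4)) :=
  s((⟨(t : ℕ), by have := t.isLt; omega⟩ : Fin (n+4)), ⟨(t : ℕ) + 3, by have := t.isLt; omega⟩)

def e2 {n : ℕ} (t : Fin (n+1)) : Sym2 (Fin (n+4)) :=
  s((⟨(t : ℕ) + 1, by have := t.isLt; omega⟩ : Fin (n+4)), ⟨(t : ℕ) + 2, by have := t.isLt; omega⟩)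

lemma insertBlock_eq {n : ℕ} (M : Finset (Sym2 (Fin n))) (t : Fin (n+1)) :
    insertBlock M t = M.image (Sym2.map (phi t)) ∪ {e1 t, e2 t} := rfl

lemma e1_ne_e2 {n : ℕ} (t : Fin (n+1)) : e1 t ≠ e2 t := by
  unfold e1 e2
  simp [Sym2.eq_iff, Fin.ext_iff]

lemma mem_image_vertex {n : ℕ} {M : Finset (Sym2 (Fin n))} {t : Fin (n+1)}
    {f : Sym2 (Fin (n+4))} (hf : f ∈ M.image (Sym2.map (phi t)))
    {v : Fin (n+4)} (hv : v ∈ f) : (v : ℕ) < (t : ℕ) ∨ (t : ℕ) + 4 ≤ (v : ℕ) := by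
  rcases Finset.mem_image.mp hf with ⟨e, -, rfl⟩
  rcases Sym2.mem_map.mp hv with ⟨u, -, rfl⟩
  rw [phi_val]
  split <;> omega

lemma disj_image {n : ℕ} (M : Finset (Sym2 (Fin n))) (t : Fin (n+1)) :
    Disjoint (M.image (Sym2.map (phi t))) ({e1 t, e2 t} : Finset (Sym2 (Fin (n+4)))) := by
  rw [Finset.disjoint_left]
  intro f hf hf2
  rcases Finset.mem_insert.mp hf2 with rfl | hf2
  · have h2 : (t : ℕ) < (t : ℕ) ∨ (t : ℕ) + 4 ≤ (t : ℕ) :=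
      mem_image_vertex hf (Sym2.mem_mk_left _ _)
    omega
  · rw [Finset.mem_singleton] at hf2; subst hf2
    have h2 : (t : ℕ) + 1 < (t : ℕ) ∨ (t : ℕ) + 4 ≤ (t : ℕ) + 1 :=
      mem_image_vertex hf (Sym2.mem_mk_left _ _)
    omega

lemma card_insertBlock {n : ℕ} (M : Finset (Sym2 (Fin n))) (t : Fin (n+1)) :
    (insertBlock M t).card = M.card + 2 := by
  rw [insertBlock_eq, Finset.card_union_of_disjoint (disj_image M t),
    Finset.card_image_of_injective _ (Sym2.map.injective (phi_strictMono t).injective),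
    Finset.card_pair (e1_ne_e2 t)]

lemma natCard_subtype {α : Type*} (s : Finset α) (P : α → Prop) :
    Nat.card {e // e ∈ s ∧ P e} = (s.filter P).card := by
  have h : {e // e ∈ s ∧ P e} ≃ {e // e ∈ s.filter P} :=
    Equiv.subtypeEquivRight (fun e => by simp)
  rw [Nat.card_congr h, Nat.card_eq_fintype_card, Fintype.card_coe]

lemma insideCount_eq {n : ℕ} (M : Finset (Sym2 (Fin n))) (a b : Fin n) :
    insideCount M a b = (M.filter (fun e => ∀ v ∈ e, a < v ∧ v < b)).card :=
  (natCard_subtype M _).trans (by congr)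

lemma outsideCount_eq {n : ℕ} (M : Finset (Sym2 (Fin n))) (a b : Fin n) :
    outsideCount M a b = (M.filter (fun e => ∀ v ∈ e, v < a ∨ b < v)).card :=
  (natCard_subtype M _).trans (by congr)

lemma forall_mem_pair {α : Type*} {x y : α} {P : α → Prop} :
    (∀ v ∈ s(x, y), P v) ↔ P x ∧ P y := by
  constructor
  · intro h; exact ⟨h x (Sym2.mem_mk_left _ _), h y (Sym2.mem_mk_right _ _)⟩
  · rintro ⟨h1, h2⟩ v hv
    rcases Sym2.mem_iff.mp hv with rfl | rfl
    · exact h1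
    · exact h2

lemma phi_val_cases {n : ℕ} (t : Fin (n+1)) (i : Fin n) :
    ((i : ℕ) < (t : ℕ) ∧ ((phi t i : Fin (n+4)) : ℕ) = (i : ℕ)) ∨
    ((t : ℕ) ≤ (i : ℕ) ∧ ((phi t i : Fin (n+4)) : ℕ) = (i : ℕ) + 4) := by
  unfold phi; split
  · left; constructor; omega; rfl
  · right; constructor; omega; rfl

lemma inside_cond_map {n : ℕ} (t : Fin (n+1)) (a b : Fin n) (f : Sym2 (Fin n)) :
    (∀ v ∈ Sym2.map (phi t) f, phi t a < v ∧ v < phi t b) ↔ (∀ v ∈ f, a < v ∧ v < b) := by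
  constructor
  · intro h v hv
    have := h (phi t v) (Sym2.mem_map.mpr ⟨v, hv, rfl⟩)
    exact ⟨(phi_lt_iff t).mp this.1, (phi_lt_iff t).mp this.2⟩
  · intro h v hv
    rcases Sym2.mem_map.mp hv with ⟨u, hu, rfl⟩
    exact ⟨(phi_lt_iff t).mpr (h u hu).1, (phi_lt_iff t).mpr (h u hu).2⟩

lemma outside_cond_map {n : ℕ} (t : Fin (n+1)) (a b : Fin n) (f : Sym2 (Fin n)) :
    (∀ v ∈ Sym2.map (phi t) f, v < phi t a ∨ phi t b < v) ↔ (∀ v ∈ f, v < a ∨ b < v) := by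
  constructor
  · intro h v hv
    rcases h (phi t v) (Sym2.mem_map.mpr ⟨v, hv, rfl⟩) with h' | h'
    · exact Or.inl ((phi_lt_iff t).mp h')
    · exact Or.inr ((phi_lt_iff t).mp h')
  · intro h v hv
    rcases Sym2.mem_map.mp hv with ⟨u, hu, rfl⟩
    rcases h u hu with h' | h'
    · exact Or.inl ((phi_lt_iff t).mpr h')
    · exact Or.inr ((phi_lt_iff t).mpr h')

lemma filter_card_insertBlock {n : ℕ} (M : Finset (Sym2 (Fin n))) (t : Fin (n+1))
    (P : Sym2 (Fin (n+4)) → Prop) [DecidablePred P] :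
    ((insertBlock M t).filter P).card =
      (M.filter (fun e => P (Sym2.map (phi t) e))).card + (({e1 t, e2 t} : Finset _).filter P).card := by
  rw [insertBlock_eq, Finset.filter_union,
    Finset.card_union_of_disjoint (Finset.disjoint_filter_filter (disj_image M t)),
    Finset.filter_image,
    Finset.card_image_of_injective _ (Sym2.map.injective (phi_strictMono t).injective)]

lemma insideCount_insertBlock {n : ℕ} (M : Finset (Sym2 (Fin n))) (t : Fin (n+1)) (a b : Fin n) :
    insideCount (insertBlock M t) (phi t a) (phi t b) =
      insideCount M a b + (if (a : ℕ) < (t : ℕ) ∧ (t : ℕ) ≤ (b : ℕ) then 2 else 0) := by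
  rw [insideCount_eq, insideCount_eq, filter_card_insertBlock]
  congr 1
  · apply congrArg
    apply Finset.filter_congr
    intro e _
    simpa using inside_cond_map t a b e
  · unfold e1 e2
    rcases phi_val_cases t a with ⟨h1, h2⟩ | ⟨h1, h2⟩ <;>
      rcases phi_val_cases t b with ⟨h3, h4⟩ | ⟨h3, h4⟩ <;>
      simp only [Finset.filter_insert, Finset.filter_singleton, forall_mem_pair, Fin.lt_def, h2, h4] <;>
      split_ifs <;> simp_all <;> omega

lemma outsideCount_insertBlock {n : ℕ} (M : Finset (Sym2 (Fin n))) (t : Fin (n+1)) (a b : Fin n) :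
    outsideCount (insertBlock M t) (phi t a) (phi t b) =
      outsideCount M a b + (if (a : ℕ) < (t : ℕ) ∧ (t : ℕ) ≤ (b : ℕ) then 0 else 2) := by
  rw [outsideCount_eq, outsideCount_eq, filter_card_insertBlock]
  congr 1
  · apply congrArg
    apply Finset.filter_congr
    intro e _
    simpa using outside_cond_map t a b e
  · unfold e1 e2
    rcases phi_val_cases t a with ⟨h1, h2⟩ | ⟨h1, h2⟩ <;>
      rcases phi_val_cases t b with ⟨h3, h4⟩ | ⟨h3, h4⟩ <;>
      simp only [Finset.filter_insert, Finset.filter_singleton, forall_mem_pair, Fin.lt_def, h2, h4] <;>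
      split_ifs <;> simp_all <;> omega

lemma redEdge_iff {n : ℕ} (M : Finset (Sym2 (Fin n))) {a b : Fin n} (hab : a < b) :
    RedEdge M s(a, b) ↔ Even (insideCount M a b) ∧ Even (outsideCount M a b) := by
  constructor
  · rintro ⟨a', b', heq, hlt, h1, h2⟩
    rcases Sym2.eq_iff.mp heq with ⟨rfl, rfl⟩ | ⟨rfl, rfl⟩
    · exact ⟨h1, h2⟩
    · exact absurd (hab.trans hlt) (lt_irrefl _)
  · rintro ⟨h1, h2⟩; exact ⟨a, b, rfl, hab, h1, h2⟩

lemma blackEdge_iff {n : ℕ} (M : Finset (Sym2 (Fin n))) {a b : Fin n} (hab : a < b) :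
    BlackEdge M s(a, b) ↔ Odd (insideCount M a b) ∧ Odd (outsideCount M a b) := by
  constructor
  · rintro ⟨a', b', heq, hlt, h1, h2⟩
    rcases Sym2.eq_iff.mp heq with ⟨rfl, rfl⟩ | ⟨rfl, rfl⟩
    · exact ⟨h1, h2⟩
    · exact absurd (hab.trans hlt) (lt_irrefl _)
  · rintro ⟨h1, h2⟩; exact ⟨a, b, rfl, hab, h1, h2⟩

lemma not_red_diag {n : ℕ} (M : Finset (Sym2 (Fin n))) (a : Fin n) :
    ¬ RedEdge M s(a, a) := by
  rintro ⟨a', b', heq, hlt, -⟩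
  rcases Sym2.eq_iff.mp heq with ⟨rfl, rfl⟩ | ⟨rfl, rfl⟩ <;> exact lt_irrefl _ hlt

lemma not_black_diag {n : ℕ} (M : Finset (Sym2 (Fin n))) (a : Fin n) :
    ¬ BlackEdge M s(a, a) := by
  rintro ⟨a', b', heq, hlt, -⟩
  rcases Sym2.eq_iff.mp heq with ⟨rfl, rfl⟩ | ⟨rfl, rfl⟩ <;> exact lt_irrefl _ hlt

lemma red_map_iff {n : ℕ} (M : Finset (Sym2 (Fin n))) (t : Fin (n+1)) (e : Sym2 (Fin n)) :
    RedEdge (insertBlock M t) (Sym2.map (phi t) e) ↔ RedEdge M e := by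
  have key : ∀ a b : Fin n, a < b →
      (RedEdge (insertBlock M t) (Sym2.map (phi t) s(a, b)) ↔ RedEdge M s(a, b)) := by
    intro a b h
    rw [Sym2.map_pair_eq, redEdge_iff _ ((phi_lt_iff t).mpr h), redEdge_iff _ h,
      insideCount_insertBlock, outsideCount_insertBlock, Nat.even_iff, Nat.even_iff,
      Nat.even_iff, Nat.even_iff]
    split_ifs <;> constructor <;> rintro ⟨h1, h2⟩ <;> constructor <;> omega
  induction e using Sym2.inductionOn with
  | hf a b =>
    rcases lt_trichotomy a b with h | rfl | h
    · exact key a b h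
    · rw [Sym2.map_pair_eq]
      simp [not_red_diag]
    · have hs : s(a, b) = s(b, a) := Sym2.eq_swap
      rw [hs]; exact key b a h

lemma black_map_iff {n : ℕ} (M : Finset (Sym2 (Fin n))) (t : Fin (n+1)) (e : Sym2 (Fin n)) :
    BlackEdge (insertBlock M t) (Sym2.map (phi t) e) ↔ BlackEdge M e := by
  have key : ∀ a b : Fin n, a < b →
      (BlackEdge (insertBlock M t) (Sym2.map (phi t) s(a, b)) ↔ BlackEdge M s(a, b)) := by
    intro a b h
    rw [Sym2.map_pair_eq, blackEdge_iff _ ((phi_lt_iff t).mpr h), blackEdge_iff _ h,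
      insideCount_insertBlock, outsideCount_insertBlock, Nat.odd_iff, Nat.odd_iff,
      Nat.odd_iff, Nat.odd_iff]
    split_ifs <;> constructor <;> rintro ⟨h1, h2⟩ <;> constructor <;> omega
  induction e using Sym2.inductionOn with
  | hf a b =>
    rcases lt_trichotomy a b with h | rfl | h
    · exact key a b h
    · rw [Sym2.map_pair_eq]
      simp [not_black_diag]
    · have hs : s(a, b) = s(b, a) := Sym2.eq_swap
      rw [hs]; exact key b a h

-- the four special points
def p0 {n : ℕ} (t : Fin (n+1)) : Fin (n+4) := ⟨(t : ℕ), by have := t.isLt; omega⟩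
def p1 {n : ℕ} (t : Fin (n+1)) : Fin (n+4) := ⟨(t : ℕ) + 1, by have := t.isLt; omega⟩
def p2 {n : ℕ} (t : Fin (n+1)) : Fin (n+4) := ⟨(t : ℕ) + 2, by have := t.isLt; omega⟩
def p3 {n : ℕ} (t : Fin (n+1)) : Fin (n+4) := ⟨(t : ℕ) + 3, by have := t.isLt; omega⟩

lemma e1_def {n : ℕ} (t : Fin (n+1)) : e1 t = s(p0 t, p3 t) := rfl
lemma e2_def {n : ℕ} (t : Fin (n+1)) : e2 t = s(p1 t, p2 t) := rfl

lemma insideCount_e1 {n : ℕ} (M : Finset (Sym2 (Fin n))) (t : Fin (n+1)) :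
    insideCount (insertBlock M t) (p0 t) (p3 t) = 1 := by
  rw [insideCount_eq, filter_card_insertBlock]
  have h1 : (M.filter (fun e => ∀ v ∈ Sym2.map (phi t) e, p0 t < v ∧ v < p3 t)) = ∅ := by
    apply Finset.filter_false_of_mem
    intro e he hall
    have hv := (Sym2.map (phi t) e).out_fst_mem
    have h2 := mem_image_vertex (Finset.mem_image_of_mem _ he) hv
    have h3 := hall _ hv
    rw [Fin.lt_def, Fin.lt_def] at h3
    simp only [p0, p3] at h3
    omega
  rw [h1, Finset.card_empty]
  rw [Finset.filter_insert, Finset.filter_singleton]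
  rw [if_neg, if_pos]
  · simp
  · rw [e2_def, forall_mem_pair]; simp only [Fin.lt_def]
    simp only [p0, p1, p2, p3]
    omega
  · rw [e1_def, forall_mem_pair]
    rintro ⟨⟨h, -⟩, -⟩
    exact lt_irrefl _ h

lemma outsideCount_e1 {n : ℕ} (M : Finset (Sym2 (Fin n))) (t : Fin (n+1)) :
    outsideCount (insertBlock M t) (p0 t) (p3 t) = M.card := by
  rw [outsideCount_eq, filter_card_insertBlock]
  have h1 : (M.filter (fun e => ∀ v ∈ Sym2.map (phi t) e, v < p0 t ∨ p3 t < v)) = M := by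
    apply Finset.filter_true_of_mem
    intro e he v hv
    have h2 := mem_image_vertex (Finset.mem_image_of_mem _ he) hv
    rw [Fin.lt_def, Fin.lt_def]
    simp only [p0, p3]
    omega
  rw [h1]
  rw [Finset.filter_insert, Finset.filter_singleton, if_neg, if_neg]
  · simp
  · rw [e2_def, forall_mem_pair]; simp only [Fin.lt_def]
    simp only [p0, p1, p2, p3]
    omega
  · rw [e1_def, forall_mem_pair]; simp only [Fin.lt_def]
    simp only [p0, p3]
    omega

lemma insideCount_e2 {n : ℕ} (M : Finset (Sym2 (Fin n))) (t : Fin (n+1)) :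
    insideCount (insertBlock M t) (p1 t) (p2 t) = 0 := by
  rw [insideCount_eq, filter_card_insertBlock]
  have h1 : (M.filter (fun e => ∀ v ∈ Sym2.map (phi t) e, p1 t < v ∧ v < p2 t)) = ∅ := by
    apply Finset.filter_false_of_mem
    intro e he hall
    have hv := (Sym2.map (phi t) e).out_fst_mem
    have h3 := hall _ hv
    rw [Fin.lt_def, Fin.lt_def] at h3
    simp only [p1, p2] at h3
    omega
  rw [h1, Finset.card_empty]
  rw [Finset.filter_insert, Finset.filter_singleton, if_neg, if_neg]
  · simp
  · rw [e2_def, forall_mem_pair]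
    rintro ⟨⟨h, -⟩, -⟩
    exact lt_irrefl _ h
  · rw [e1_def, forall_mem_pair]; simp only [Fin.lt_def]
    simp only [p0, p1, p2, p3]
    omega

lemma outsideCount_e2 {n : ℕ} (M : Finset (Sym2 (Fin n))) (t : Fin (n+1)) :
    outsideCount (insertBlock M t) (p1 t) (p2 t) = M.card + 1 := by
  rw [outsideCount_eq, filter_card_insertBlock]
  have h1 : (M.filter (fun e => ∀ v ∈ Sym2.map (phi t) e, v < p1 t ∨ p2 t < v)) = M := by
    apply Finset.filter_true_of_mem
    intro e he v hv
    have h2 := mem_image_vertex (Finset.mem_image_of_mem _ he) hv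
    rw [Fin.lt_def, Fin.lt_def]
    simp only [p1, p2]
    omega
  rw [h1]
  rw [Finset.filter_insert, Finset.filter_singleton, if_pos, if_neg]
  · simp
  · rw [e2_def, forall_mem_pair]; simp only [Fin.lt_def]
    simp only [p1, p2]
    omega
  · rw [e1_def, forall_mem_pair]; simp only [Fin.lt_def]
    simp only [p0, p1, p2, p3]
    omega

lemma p0_lt_p3 {n : ℕ} (t : Fin (n+1)) : p0 t < p3 t := by
  rw [Fin.lt_def]; simp only [p0, p3]; omega

lemma p1_lt_p2 {n : ℕ} (t : Fin (n+1)) : p1 t < p2 t := by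
  rw [Fin.lt_def]; simp only [p1, p2]; omega

lemma main {n : ℕ} {M : Finset (Sym2 (Fin n))} (h : IsIMatching n M) :
    ∃ m : ℕ, n = 2 * (2 * m + 1) ∧ M.card = 2 * m + 1 ∧
      (M.filter (RedEdge M)).card = m + 1 ∧
      (M.filter (BlackEdge M)).card = m := by
  induction h with
  | base =>
    refine ⟨0, rfl, Finset.card_singleton _, ?_, ?_⟩
    · have hin : insideCount ({s(0, 1)} : Finset (Sym2 (Fin 2))) 0 1 = 0 := by
        rw [insideCount_eq, Finset.filter_singleton, if_neg, Finset.card_empty]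
        rw [forall_mem_pair]
        rintro ⟨⟨h, -⟩, -⟩
        exact lt_irrefl _ h
      have hout : outsideCount ({s(0, 1)} : Finset (Sym2 (Fin 2))) 0 1 = 0 := by
        rw [outsideCount_eq, Finset.filter_singleton, if_neg, Finset.card_empty]
        rw [forall_mem_pair]
        rintro ⟨h, -⟩
        rcases h with h | h
        · exact lt_irrefl _ h
        · exact absurd h (by decide)
      rw [Finset.filter_singleton, if_pos, Finset.card_singleton]
      rw [redEdge_iff _ (by decide : (0 : Fin 2) < 1), hin, hout]
      exact ⟨Even.zero, Even.zero⟩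
    · have hin : insideCount ({s(0, 1)} : Finset (Sym2 (Fin 2))) 0 1 = 0 := by
        rw [insideCount_eq, Finset.filter_singleton, if_neg, Finset.card_empty]
        rw [forall_mem_pair]
        rintro ⟨⟨h, -⟩, -⟩
        exact lt_irrefl _ h
      rw [Finset.filter_singleton, if_neg, Finset.card_empty]
      rw [blackEdge_iff _ (by decide : (0 : Fin 2) < 1), hin]
      rintro ⟨h, -⟩
      have := Nat.odd_iff.mp h; omega
  | step M t hM ih =>
    obtain ⟨m, hn, hcard, hred, hblack⟩ := ih
    have hr2 : RedEdge (insertBlock M t) (e2 t) := by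
      rw [e2_def, redEdge_iff _ (p1_lt_p2 t), insideCount_e2, outsideCount_e2, hcard]
      exact ⟨Even.zero, ⟨m + 1, by ring⟩⟩
    have hnr1 : ¬ RedEdge (insertBlock M t) (e1 t) := by
      rw [e1_def, redEdge_iff _ (p0_lt_p3 t), insideCount_e1]
      rintro ⟨h1, -⟩
      have := Nat.even_iff.mp h1; omega
    have hb1 : BlackEdge (insertBlock M t) (e1 t) := by
      rw [e1_def, blackEdge_iff _ (p0_lt_p3 t), insideCount_e1, outsideCount_e1, hcard]
      exact ⟨odd_one, ⟨m, by ring⟩⟩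
    have hnb2 : ¬ BlackEdge (insertBlock M t) (e2 t) := by
      rw [e2_def, blackEdge_iff _ (p1_lt_p2 t), insideCount_e2]
      rintro ⟨h1, -⟩
      have := Nat.odd_iff.mp h1; omega
    refine ⟨m + 1, by omega, by rw [card_insertBlock]; omega, ?_, ?_⟩
    · rw [filter_card_insertBlock]
      have h1 : M.filter (fun e => RedEdge (insertBlock M t) (Sym2.map (phi t) e)) =
          M.filter (RedEdge M) := Finset.filter_congr (fun e _ => by rw [red_map_iff])
      rw [h1, hred, Finset.filter_insert, if_neg hnr1, Finset.filter_singleton, if_pos hr2,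
        Finset.card_singleton]
    · rw [filter_card_insertBlock]
      have h1 : M.filter (fun e => BlackEdge (insertBlock M t) (Sym2.map (phi t) e)) =
          M.filter (BlackEdge M) := Finset.filter_congr (fun e _ => by rw [black_map_iff])
      rw [h1, hblack, Finset.filter_insert, if_pos hb1, Finset.filter_singleton, if_neg hnb2,
        Finset.card_insert_of_notMem (Finset.notMem_empty _), Finset.card_empty]

end IMRB

/-- In an I-matching of size `k = 2ℓ − 1` there are exactly `ℓ` red edges and
`ℓ − 1` black edges. -/
theorem IMatching_red_black_count (ℓ : ℕ) (hℓ : 1 ≤ ℓ)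
    (M : Finset (Sym2 (Fin (2 * (2 * ℓ - 1)))))
    (hM : IsIMatching (2 * (2 * ℓ - 1)) M) :
    Nat.card {e : Sym2 (Fin (2 * (2 * ℓ - 1))) // e ∈ M ∧ RedEdge M e} = ℓ ∧
    Nat.card {e : Sym2 (Fin (2 * (2 * ℓ - 1))) // e ∈ M ∧ BlackEdge M e} = ℓ - 1 := by
  obtain ⟨m, hn, hc, hr, hb⟩ := IMRB.main hM
  have hl : ℓ = m + 1 := by omega
  constructor
  · rw [IMRB.natCard_subtype, hr]; omega
  · rw [IMRB.natCard_subtype, hb]; omega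
end
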